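/- arXiv:2411.14087 — 9 statements merged into one kernel-verified Lean document; each statement's English description precedes it below -/
import Mathlib

section
/- Let A ≥ 1 be an odd integer, let ℓ ≥ 2 be an integer, and let s ≥ 1 be an integer. Then A^s ≡ 2^ℓ − 1 (mod 2^{ℓ+1}) if and only if both A ≡ 2^ℓ − 1 (mod 2^{ℓ+1}) and s is odd. -/
private lemma aux_pow_two_pow (k : ℕ) (a : ℤ) (ha : Odd a) :
    a ^ 2 ^ (k + 1) ≡ 1 [ZMOD (2 : ℤ) ^ (k + 3)] := by
  induction k with
  | zero =>
      obtain ⟨m, hm⟩ := ha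
      obtain ⟨t, ht⟩ : Even (m * (m + 1)) := Int.even_mul_succ_self m
      rw [Int.ModEq]
      have h : a ^ 2 ^ 1 = 8 * t + 1 := by
        have : a ^ 2 = 4 * (m * (m + 1)) + 1 := by rw [hm]; ring
        rw [pow_one] at *
        omega
      rw [h]
      norm_num
  | succ k ih =>
      have hdvd : (2 : ℤ) ^ (k + 3) ∣ a ^ 2 ^ (k + 1) - 1 := (Int.modEq_iff_dvd.mp ih.symm)
      obtain ⟨c, hc⟩ := hdvd
      have key : a ^ 2 ^ (k + 2) - 1 = 2 ^ (k + 4) * (c + c ^ 2 * 2 ^ (k + 2)) := by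
        have h1 : a ^ 2 ^ (k + 2) = (a ^ 2 ^ (k + 1)) ^ 2 := by
          rw [← pow_mul]; ring_nf
        have h2 : a ^ 2 ^ (k + 1) = 1 + 2 ^ (k + 3) * c := by omega
        rw [h1, h2]; ring
      exact (Int.modEq_iff_dvd.mpr ⟨_, key⟩).symm

/-- Let `A ≥ 1` be an odd integer, `ℓ ≥ 2`, `s ≥ 1`. Then
`A^s ≡ 2^ℓ − 1 (mod 2^(ℓ+1))` iff `A ≡ 2^ℓ − 1 (mod 2^(ℓ+1))` and `s` is odd. -/
theorem pow_modeq_two_pow_sub_one_iff' (A ℓ s : ℕ) (hA1 : 1 ≤ A) (hA : Odd A)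
    (hℓ : 2 ≤ ℓ) (hs : 1 ≤ s) :
    A ^ s ≡ 2 ^ ℓ - 1 [MOD 2 ^ (ℓ + 1)] ↔
      (A ≡ 2 ^ ℓ - 1 [MOD 2 ^ (ℓ + 1)] ∧ Odd s) := by
  obtain ⟨k, rfl⟩ : ∃ k, ℓ = k + 2 := ⟨ℓ - 2, by omega⟩
  set N : ℕ := 2 ^ (k + 3) with hN
  have h1le : (1 : ℕ) ≤ 2 ^ (k + 2) := Nat.one_le_two_pow
  have hcast : ∀ a b : ℕ, (a ≡ b [MOD N]) ↔ ((a : ZMod N) = (b : ZMod N)) :=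
    fun a b => (ZMod.natCast_eq_natCast_iff a b N).symm
  have hCval : ((2 ^ (k + 2) - 1 : ℕ) : ZMod N) = (2 : ZMod N) ^ (k + 2) - 1 := by
    rw [Nat.cast_sub h1le]; push_cast; ring
  have hNzero : ((2 : ZMod N)) ^ (k + 3) = 0 := by
    have := ZMod.natCast_self N
    rw [hN] at this ⊢
    push_cast at this
    exact this
  have hCsq : ((2 ^ (k + 2) - 1 : ℕ) : ZMod N) ^ 2 = 1 := by
    rw [hCval]
    have h2 : (2 : ZMod N) ^ (k + 2) * (2 : ZMod N) ^ (k + 2) = 2 ^ (k + 3) * 2 ^ (k + 1) := by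
      rw [← pow_add, ← pow_add]; ring_nf
    have h3 : (2 : ZMod N) * 2 ^ (k + 2) = 2 ^ (k + 3) := by rw [← pow_succ']
    calc ((2 : ZMod N) ^ (k + 2) - 1) ^ 2
        = 2 ^ (k + 2) * 2 ^ (k + 2) - 2 * 2 ^ (k + 2) + 1 := by ring
      _ = 1 := by rw [h2, h3, hNzero]; ring
  have hAord : ((A : ZMod N)) ^ 2 ^ (k + 1) = 1 := by
    have h0 := aux_pow_two_pow k (A : ℤ) (by exact_mod_cast hA)
    have h1 : (A : ℤ) ^ 2 ^ (k + 1) ≡ 1 [ZMOD (N : ℤ)] := by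
      rw [hN]; push_cast; exact h0
    have h := (ZMod.intCast_eq_intCast_iff _ _ _).mpr h1
    push_cast at h
    exact h
  constructor
  · intro h
    have hsodd : Odd s := by
      by_contra hse
      rw [Nat.not_odd_iff_even] at hse
      obtain ⟨t, rfl⟩ := hse
      have h4 : A ^ (t + t) % 4 = (2 ^ (k + 2) - 1) % 4 := by
        have : (4 : ℕ) ∣ N := ⟨2 ^ (k + 1), by rw [hN]; ring⟩
        exact h.of_dvd this
      obtain ⟨m, hm⟩ := hA.pow (n := t)
      have hAt : A ^ (t + t) = 4 * (m * (m + 1)) + 1 := by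
        have : A ^ (t + t) = (A ^ t) ^ 2 := by rw [← pow_mul]; ring_nf
        rw [this, hm]; ring
      have h2k : (2:ℕ) ^ (k + 2) = 4 * 2 ^ k := by ring
      have hk1 : (1:ℕ) ≤ 2 ^ k := Nat.one_le_two_pow
      rw [hAt, h2k] at h4
      have e1 : (4 * (m * (m + 1)) + 1) % 4 = 1 := by omega
      have e2 : (4 * 2 ^ k - 1) % 4 = 3 := by omega
      omega
    refine ⟨?_, hsodd⟩
    rw [hcast] at h ⊢
    rw [Nat.cast_pow] at h
    have hdvd1 : orderOf (A : ZMod N) ∣ 2 * s := by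
      apply orderOf_dvd_of_pow_eq_one
      rw [mul_comm, pow_mul, h, hCsq]
    have hdvd2 : orderOf (A : ZMod N) ∣ 2 * 2 ^ k := by
      apply orderOf_dvd_of_pow_eq_one
      rw [show 2 * 2 ^ k = 2 ^ (k + 1) by ring, hAord]
    have hcop : Nat.gcd s (2 ^ k) = 1 := (hsodd.coprime_two_right.pow_right k)
    have hdvd : orderOf (A : ZMod N) ∣ 2 := by
      have := Nat.dvd_gcd hdvd1 hdvd2
      rwa [Nat.gcd_mul_left, hcop, mul_one] at this
    have hA2 : (A : ZMod N) ^ 2 = 1 := orderOf_dvd_iff_pow_eq_one.mp hdvd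
    obtain ⟨t, rfl⟩ := hsodd
    calc (A : ZMod N) = ((A : ZMod N) ^ 2) ^ t * A := by rw [hA2]; ring
      _ = (A : ZMod N) ^ (2 * t + 1) := by rw [← pow_mul, ← pow_succ]
      _ = ((2 ^ (k + 2) - 1 : ℕ) : ZMod N) := h
  · rintro ⟨h, ⟨t, rfl⟩⟩
    rw [hcast] at h ⊢
    rw [Nat.cast_pow, pow_succ, pow_mul, h, hCsq, one_pow, one_mul]
end

section
/- Assume the standard setup, and let ℓ ≥ 3 be an integer with q ≡ 2^ℓ − 1 (mod 2^{ℓ+1}). Let L be the unique subfield of F with q elements, let m = (q0−1)/2, and let H_m be the unique subgroup of Fˣ of order m(q+1). Suppose that for every α ∈ L with α ≠ 0 there exist x1, x2, x3, y1, y2, y3 ∈ L satisfying x1 + x2 + x3 = α, y1 + y2 + y3 = 0, x1² + y1² = 1, x2² + y2² = 1, and x3² + y3² = 1. Then every γ ∈ Fˣ satisfying (γ^{q−1})^{2^{ℓ−1}} = 1 can be written as γ = h1 + h2 + h3 (an equality in F) with h1, h2, h3 ∈ H_m. -/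
/-!
A `γ` with `(γ^(q-1))^(2^(ℓ-1)) = 1` is a square `δ²` in `Fˣ`, because `2^ℓ ∣ q + 1`.
Writing `δ² = δ^(q+1) · δ^(1-q)` splits it as `a · z` with `a ∈ Lˣ` and `z^(q+1) = 1`.
As `q ≡ 3 (mod 4)`, `F = L(i)` with `i² = -1` and `i^q = -i`, so Frobenius maps `x + i y`
to `x - i y` and `(x + i y)^(q+1) = x² + y²`. A solution of the system for `α = a` thus gives
three `(q+1)`-th roots of unity `x_j + i y_j` summing to `a`; multiplying them by `z` gives `γ`.
Finally `Hm`, the unique subgroup of order `m(q+1)` of the cyclic group `Fˣ`, contains all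
`(q+1)`-th roots of unity.
-/

theorem Subgroup.eq_rootsOfUnity_natCard {R : Type*} [CommRing R] [IsDomain R]
    (S : Subgroup Rˣ) [Finite S] : S = rootsOfUnity (Nat.card S) R := by
  have : NeZero (Nat.card S) := ⟨Nat.card_pos.ne'⟩
  refine Subgroup.eq_of_le_of_card_ge (fun u hu => ?_) (card_rootsOfUnity R _)
  rw [mem_rootsOfUnity]
  exact congrArg Subtype.val (pow_card_eq_one' (x := (⟨u, hu⟩ : S)))

theorem Nat.two_pow_dvd_add_one_of_modEq {q ℓ : ℕ} (h : q ≡ 2 ^ ℓ - 1 [MOD 2 ^ (ℓ + 1)]) :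
    2 ^ ℓ ∣ q + 1 := by
  have h' : q + 1 ≡ 2 ^ ℓ - 1 + 1 [MOD 2 ^ ℓ] :=
    (Nat.ModEq.of_mul_right 2 (by rwa [← pow_succ])).add_right 1
  rw [Nat.sub_add_cancel Nat.one_le_two_pow] at h'
  exact (Nat.modEq_zero_iff_dvd.1 (h'.trans (Nat.modEq_zero_iff_dvd.2 dvd_rfl)))

theorem Nat.sq_div_two_of_odd {q : ℕ} (hq : Odd q) : q ^ 2 / 2 = (q - 1) * ((q + 1) / 2) := by
  obtain ⟨r, rfl⟩ := hq
  have hsq : (2 * r + 1) ^ 2 = 2 * (2 * r * (r + 1)) + 1 := by ring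
  rw [hsq, show 2 * r + 1 - 1 = 2 * r by omega, show (2 * r + 1 + 1) / 2 = r + 1 by omega]
  omega

theorem pow_eq_neg_of_sq_eq_neg_one {R : Type*} [Ring R] {i : R} (hi : i ^ 2 = -1) {n : ℕ}
    (hn : n % 4 = 3) : i ^ n = -i := by
  obtain ⟨k, rfl⟩ : ∃ k, n = 2 * (2 * k + 1) + 1 := ⟨n / 4, by omega⟩
  rw [pow_succ, pow_mul, hi, (odd_two_mul_add_one k).neg_one_pow, neg_one_mul]

section FiniteField

variable {F : Type*} [Field F]

theorem Subfield.add_pow_natCard (K : Subfield F) [Finite K] (a b : F) :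
    (a + b) ^ Nat.card K = a ^ Nat.card K + b ^ Nat.card K := by
  let := Fintype.ofFinite K
  obtain ⟨p, hpK, n, hp, hcard⟩ := FiniteField.card' K
  have : Fact p.Prime := ⟨hp⟩
  have : CharP F p := (Algebra.charP_iff K F p).1 hpK
  rw [Nat.card_eq_fintype_card, hcard, add_pow_char_pow]

theorem Subfield.pow_natCard_eq_self (K : Subfield F) [Finite K]
    {x : F} (hx : x ∈ K) : x ^ Nat.card K = x := by
  let := Fintype.ofFinite K
  simpa [Nat.card_eq_fintype_card] using
    congrArg Subtype.val (FiniteField.pow_card (⟨x, hx⟩ : K))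

open Polynomial in
theorem Subfield.mem_iff_pow_natCard_eq_self (K : Subfield F) [Finite K]
    {x : F} : x ∈ K ↔ x ^ Nat.card K = x := by
  let := Fintype.ofFinite K
  refine ⟨K.pow_natCard_eq_self, fun hx => ?_⟩
  have hK : 1 < Fintype.card K := Fintype.one_lt_card
  have hsplit : Splits (X ^ Fintype.card K - X : K[X]) := by
    rw [splits_iff_card_roots, FiniteField.roots_X_pow_card_sub_X, ← Finset.card_def,
      Finset.card_univ, FiniteField.X_pow_card_sub_X_natDegree_eq _ hK]
  -- `X^q - X` splits over `K` with root set `K`, so its roots in `F` are the elements of `K`.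
  have := FiniteField.roots_X_pow_card_sub_X K ▸ hsplit.roots_map K.subtype ▸
    Multiset.mem_map (b := x)
  rw [Nat.card_eq_fintype_card] at hx
  simpa [sub_eq_zero, iff_comm, FiniteField.X_pow_card_sub_X_ne_zero F hK, hx] using this

theorem Subfield.add_mul_pow_natCard_add_one (K : Subfield F) [Finite K] {i : F}
    (hi : i ^ 2 = -1) (hiK : i ^ Nat.card K = -i) {x y : F} (hx : x ∈ K) (hy : y ∈ K) :
    (x + i * y) ^ (Nat.card K + 1) = x ^ 2 + y ^ 2 := by
  have hconj : (x + i * y) ^ Nat.card K = x - i * y := by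
    rw [K.add_pow_natCard, mul_pow, hiK, K.pow_natCard_eq_self hx, K.pow_natCard_eq_self hy]
    ring
  rw [pow_succ, hconj]
  linear_combination (-y ^ 2) * hi

theorem Subfield.exists_mem_rootsOfUnity_val_eq (K : Subfield F) [Finite K] {i : F}
    (hi : i ^ 2 = -1) (hiK : i ^ Nat.card K = -i) {x y : F} (hx : x ∈ K) (hy : y ∈ K)
    (hxy : x ^ 2 + y ^ 2 = 1) :
    ∃ u ∈ rootsOfUnity (Nat.card K + 1) F, (u : F) = x + i * y := by
  have hnorm := K.add_mul_pow_natCard_add_one hi hiK hx hy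
  rw [hxy] at hnorm
  have hne : x + i * y ≠ 0 := by
    rintro h
    simp [h] at hnorm
  refine ⟨Units.mk0 _ hne, ?_, rfl⟩
  rw [mem_rootsOfUnity, Units.ext_iff]
  simpa using hnorm

variable [Fintype F]

theorem Subfield.exists_sq_eq_neg_one_and_pow_natCard_eq_neg (K : Subfield F)
    (hF : Fintype.card F = Nat.card K ^ 2) (hK : Nat.card K % 4 = 3) :
    ∃ i : F, i ^ 2 = -1 ∧ i ^ Nat.card K = -i := by
  obtain ⟨i, hi⟩ : IsSquare (-1 : F) := by
    rw [FiniteField.isSquare_neg_one_iff, hF, Nat.pow_mod, hK]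
    norm_num
  have hi2 : i ^ 2 = -1 := by rw [sq, hi]
  exact ⟨i, hi2, pow_eq_neg_of_sq_eq_neg_one hi2 hK⟩

theorem FiniteField.isSquare_of_pow_mul_two_pow_eq_one {q ℓ : ℕ}
    (hF : Fintype.card F = q ^ 2) (hℓ : 1 ≤ ℓ) (hq : 2 ^ ℓ ∣ q + 1) {γ : Fˣ}
    (hγ : (γ ^ (q - 1)) ^ 2 ^ (ℓ - 1) = 1) :
    IsSquare γ := by
  have hqodd : Odd q := Nat.odd_iff.2 (by have := (dvd_pow_self 2 (by omega)).trans hq; omega)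
  have hchar : ringChar F ≠ 2 := by
    rw [Ne, FiniteField.even_card_iff_char_two, hF, Nat.odd_iff.1 hqodd.pow]
    decide
  obtain ⟨c, hc⟩ : 2 ^ (ℓ - 1) ∣ (q + 1) / 2 :=
    Nat.dvd_div_of_mul_dvd (by rwa [← pow_succ', Nat.sub_add_cancel hℓ])
  rw [FiniteField.unit_isSquare_iff hchar, hF, Nat.sq_div_two_of_odd hqodd, hc, ← mul_assoc,
    pow_mul, pow_mul, hγ, one_pow]

theorem Subfield.exists_mul_self_eq_mul_mem_rootsOfUnity (K : Subfield F)
    (hF : Fintype.card F = Nat.card K ^ 2) (δ : Fˣ) :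
    ∃ a z : Fˣ, (a : F) ∈ K ∧ z ∈ rootsOfUnity (Nat.card K + 1) F ∧ δ * δ = a * z := by
  classical
  have hδ : δ ^ ((Nat.card K + 1) * (Nat.card K - 1)) = 1 := by
    rw [← Nat.sq_sub_sq, one_pow, ← hF, ← Fintype.card_units, pow_card_eq_one]
  have hq : 1 ≤ Nat.card K := Nat.card_pos
  refine ⟨δ ^ (Nat.card K + 1), (δ ^ (Nat.card K - 1))⁻¹, ?_, ?_, ?_⟩
  · rw [K.mem_iff_pow_natCard_eq_self, ← Units.val_pow_eq_pow_val, ← pow_mul]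
    congr 1
    calc δ ^ ((Nat.card K + 1) * Nat.card K)
        = δ ^ ((Nat.card K + 1) * (Nat.card K - 1)) * δ ^ (Nat.card K + 1) := by
          rw [← pow_add, ← mul_add_one, Nat.sub_add_cancel hq]
      _ = δ ^ (Nat.card K + 1) := by rw [hδ, one_mul]
  · rw [mem_rootsOfUnity, inv_pow, ← pow_mul, mul_comm, hδ, inv_one]
  · rw [eq_mul_inv_iff_mul_eq, ← pow_two, ← pow_add]
    congr 1
    omega

end FiniteField

theorem propertyPi_even_of_system_general (q ℓ : ℕ) (hℓ : 3 ≤ ℓ)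
    (hqmod : q ≡ 2 ^ ℓ - 1 [MOD 2 ^ (ℓ + 1)])
    (F : Type*) [Field F] [Fintype F] (hF : Fintype.card F = q ^ 2)
    (L : Subfield F) (hL : Nat.card L = q)
    (m : ℕ)
    (Hm : Subgroup Fˣ) (hHm : Nat.card Hm = m * (q + 1))
    (hsys : ∀ α : F, α ∈ L → α ≠ 0 →
      ∃ x1 x2 x3 y1 y2 y3 : F,
        x1 ∈ L ∧ x2 ∈ L ∧ x3 ∈ L ∧ y1 ∈ L ∧ y2 ∈ L ∧ y3 ∈ L ∧
        x1 + x2 + x3 = α ∧ y1 + y2 + y3 = 0 ∧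
        x1 ^ 2 + y1 ^ 2 = 1 ∧ x2 ^ 2 + y2 ^ 2 = 1 ∧ x3 ^ 2 + y3 ^ 2 = 1) :
    ∀ γ : Fˣ, (γ ^ (q - 1)) ^ 2 ^ (ℓ - 1) = 1 →
      ∃ h1 h2 h3 : Fˣ, h1 ∈ Hm ∧ h2 ∈ Hm ∧ h3 ∈ Hm ∧
        (h1 : F) + (h2 : F) + (h3 : F) = (γ : F) := by
  intro γ hγ
  subst hL
  have hq : 2 ^ ℓ ∣ Nat.card L + 1 := Nat.two_pow_dvd_add_one_of_modEq hqmod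
  have hq4 : Nat.card L % 4 = 3 := by
    have : 4 ∣ Nat.card L + 1 := (pow_dvd_pow 2 (by omega : 2 ≤ ℓ)).trans hq
    omega
  obtain ⟨i, hi, hiL⟩ := Subfield.exists_sq_eq_neg_one_and_pow_natCard_eq_neg L hF hq4
  obtain ⟨δ, rfl⟩ := FiniteField.isSquare_of_pow_mul_two_pow_eq_one hF (by omega) hq hγ
  obtain ⟨a, z, haL, hz, hδ⟩ := Subfield.exists_mul_self_eq_mul_mem_rootsOfUnity L hF δ
  have hH : rootsOfUnity (Nat.card L + 1) F ≤ Hm := by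
    rw [Hm.eq_rootsOfUnity_natCard, hHm]
    exact rootsOfUnity_le_of_dvd (dvd_mul_left _ _)
  obtain ⟨x1, x2, x3, y1, y2, y3, hx1, hx2, hx3, hy1, hy2, hy3, hx, hy, h1, h2, h3⟩ :=
    hsys a haL a.ne_zero
  obtain ⟨u1, hu1, hu1v⟩ := L.exists_mem_rootsOfUnity_val_eq hi hiL hx1 hy1 h1
  obtain ⟨u2, hu2, hu2v⟩ := L.exists_mem_rootsOfUnity_val_eq hi hiL hx2 hy2 h2
  obtain ⟨u3, hu3, hu3v⟩ := L.exists_mem_rootsOfUnity_val_eq hi hiL hx3 hy3 h3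
  refine ⟨u1 * z, u2 * z, u3 * z, hH (mul_mem hu1 hz), hH (mul_mem hu2 hz),
    hH (mul_mem hu3 hz), ?_⟩
  simp only [Units.val_mul, hδ, hu1v, hu2v, hu3v]
  linear_combination (z : F) * hx + i * z * hy

/-- Standard setup, `ℓ ≥ 3`, `q ≡ 2^ℓ − 1 (mod 2^(ℓ+1))`. If for every nonzero `α`
in the subfield `L` of cardinality `q` the system
`x1+x2+x3 = α`, `y1+y2+y3 = 0`, `xi² + yi² = 1` is solvable in `L`, then every
`γ ∈ Fˣ` with `(γ^(q−1))^(2^(ℓ−1)) = 1` is a sum of three elements of `H_m`. -/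
theorem propertyPi_even_of_system (q0 s q ℓ : ℕ) (hq0 : IsPrimePow q0)
    (hq0odd : Odd q0) (hs : Odd s) (hq : q = q0 ^ s) (hℓ : 3 ≤ ℓ)
    (hqmod : q ≡ 2 ^ ℓ - 1 [MOD 2 ^ (ℓ + 1)])
    (F : Type*) [Field F] [Fintype F] (hF : Fintype.card F = q ^ 2)
    (L : Subfield F) (hL : Nat.card L = q)
    (m : ℕ) (hm : m = (q0 - 1) / 2)
    (Hm : Subgroup Fˣ) (hHm : Nat.card Hm = m * (q + 1))
    (hsys : ∀ α : F, α ∈ L → α ≠ 0 →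
      ∃ x1 x2 x3 y1 y2 y3 : F,
        x1 ∈ L ∧ x2 ∈ L ∧ x3 ∈ L ∧ y1 ∈ L ∧ y2 ∈ L ∧ y3 ∈ L ∧
        x1 + x2 + x3 = α ∧ y1 + y2 + y3 = 0 ∧
        x1 ^ 2 + y1 ^ 2 = 1 ∧ x2 ^ 2 + y2 ^ 2 = 1 ∧ x3 ^ 2 + y3 ^ 2 = 1) :
    ∀ γ : Fˣ, (γ ^ (q - 1)) ^ 2 ^ (ℓ - 1) = 1 →
      ∃ h1 h2 h3 : Fˣ, h1 ∈ Hm ∧ h2 ∈ Hm ∧ h3 ∈ Hm ∧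
        (h1 : F) + (h2 : F) + (h3 : F) = (γ : F) :=
  propertyPi_even_of_system_general q ℓ hℓ hqmod F hF L hL m Hm hHm hsys
end

section
/- Assume the standard setup, and let ℓ ≥ 3 be an integer with q ≡ 2^ℓ − 1 (mod 2^{ℓ+1}). Let L be the unique subfield of F with q elements, let m = (q0−1)/2, let H_m be the unique subgroup of Fˣ of order m(q+1), and let D ∈ L be a nonzero element that is not a square in L. Suppose that for every α ∈ L with α ≠ 0 there exist x1, x2, x3, y1, y2, y3 ∈ L satisfying x1 + x2 + x3 = α, y1 + y2 + y3 = 0, x1² + y1² = D, x2² + y2² = D, and x3² + y3² = D. Then every γ ∈ Fˣ satisfying (γ^{q−1})^{2^ℓ} = 1 and (γ^{q−1})^{2^{ℓ−1}} ≠ 1 can be written as γ = h1 + h2 + h3 (an equality in F) with h1, h2, h3 ∈ H_m. -/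
/-!
Since `q ≡ 3 (mod 4)`, `F = L(i)` with `i² = -1` and `i^q = -i`, so the norm
`z ↦ z^(q+1)` of `F/L` sends `x + y i` to `x² + y²`. The condition on `γ` makes its
norm `b = γ^(q+1)` a non-square of `L`, so `b D = σ²` for some `σ ∈ L`, and `γ / σ` has norm
`1 / D`. Solving the system for `α = σ` writes `γ = ∑ (γ / σ) (x_j + y_j i)`, a sum of three
elements of norm `1`, i.e. of the subgroup of order `q + 1`, which lies in `H_m`.
-/

theorem Nat.exists_odd_add_one_eq_two_pow_mul {q ℓ : ℕ}
    (h : q ≡ 2 ^ ℓ - 1 [MOD 2 ^ (ℓ + 1)]) : ∃ t, Odd t ∧ q + 1 = 2 ^ ℓ * t := by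
  have hpos : 0 < 2 ^ ℓ := Nat.two_pow_pos ℓ
  have hmod : q % (2 * 2 ^ ℓ) = 2 ^ ℓ - 1 := by
    rwa [Nat.ModEq, pow_succ', Nat.mod_eq_of_lt (a := 2 ^ ℓ - 1) (by omega)] at h
  refine ⟨2 * (q / (2 * 2 ^ ℓ)) + 1, odd_two_mul_add_one _, ?_⟩
  have := Nat.div_add_mod q (2 * 2 ^ ℓ)
  rw [hmod] at this
  rw [mul_add, mul_one, ← mul_assoc, mul_comm (2 ^ ℓ) 2]
  omega

theorem pow_two_pow_pred_eq_neg_one {R : Type*} [Ring R] [NoZeroDivisors R] {x : R} {ℓ : ℕ}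
    (hℓ : 1 ≤ ℓ) (h : x ^ 2 ^ ℓ = 1) (hne : x ^ 2 ^ (ℓ - 1) ≠ 1) : x ^ 2 ^ (ℓ - 1) = -1 := by
  refine (sq_eq_one_iff.mp ?_).resolve_left hne
  rw [← pow_mul, ← pow_succ, Nat.sub_add_cancel hℓ, h]

theorem pow_add_one_pow_div_two_eq_neg_one {M : Type*} [Monoid M] [HasDistribNeg M] {x : M}
    {q ℓ t : ℕ} (hℓ : 1 ≤ ℓ) (ht : Odd t) (hq : q + 1 = 2 ^ ℓ * t)
    (hx : (x ^ (q - 1)) ^ 2 ^ (ℓ - 1) = -1) : (x ^ (q + 1)) ^ ((q - 1) / 2) = -1 := by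
  obtain ⟨k, rfl⟩ : ∃ k, ℓ = k + 1 := ⟨ℓ - 1, by omega⟩
  have hexp : (q + 1) * ((q - 1) / 2) = (q - 1) * 2 ^ k * t := by
    rw [pow_succ, mul_comm _ 2, mul_assoc] at hq
    obtain ⟨r, hr⟩ : ∃ r, q - 1 = 2 * r := ⟨2 ^ k * t - 1, by omega⟩
    rw [hq, hr, Nat.mul_div_cancel_left r two_pos]
    ring
  rw [Nat.add_sub_cancel] at hx
  rw [← pow_mul, hexp, pow_mul, pow_mul, hx, ht.neg_one_pow]

theorem FiniteField.isSquare_mul_of_pow_card_div_two_eq_neg_one {K : Type*} [Field K]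
    [Fintype K] (hK : ringChar K ≠ 2) {a b : K} (ha : a ^ (Fintype.card K / 2) = -1)
    (hb : ¬IsSquare b) : IsSquare (a * b) := by
  have ha0 : a ≠ 0 := by
    rintro rfl
    rw [zero_pow (Nat.div_pos Fintype.one_lt_card two_pos).ne'] at ha
    exact zero_ne_one (neg_eq_zero.mp ha.symm).symm
  have hb0 : b ≠ 0 := by rintro rfl; exact hb IsSquare.zero
  have hb' : b ^ (Fintype.card K / 2) = -1 :=
    (pow_dichotomy hK hb0).resolve_left (mt (isSquare_iff hK hb0).mpr hb)
  rw [isSquare_iff hK (mul_ne_zero ha0 hb0), mul_pow, ha, hb']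
  norm_num

theorem Subgroup.mem_of_pow_card_eq_one {G : Type*} [CommGroup G] [IsCyclic G] [Finite G]
    (H : Subgroup G) {u : G} (hu : u ^ Nat.card H = 1) : u ∈ H := by
  have hker : H = (powMonoidHom (Nat.card H) : G →* G).ker := by
    refine Subgroup.eq_of_le_of_card_ge (fun x hx => ?_) ?_
    · exact congrArg Subtype.val (pow_card_eq_one' (G := H) (x := ⟨x, hx⟩))
    · rw [IsCyclic.card_powMonoidHom_ker, Nat.gcd_eq_right (Subgroup.card_subgroup_dvd_card H)]
  rw [hker]
  exact hu

section

variable {F : Type*} [Field F]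

namespace Subfield

variable (L : Subfield F) [Finite L] {q : ℕ}

theorem pow_card_eq_self (hL : Nat.card L = q) {x : F} (hx : x ∈ L) : x ^ q = x := by
  have := Fintype.ofFinite L
  rw [← hL, Nat.card_eq_fintype_card]
  exact congrArg Subtype.val (FiniteField.pow_card (⟨x, hx⟩ : L))

theorem pow_card_add_mul (hL : Nat.card L = q) {x y : F} (hx : x ∈ L) (hy : y ∈ L) (i : F) :
    (x + y * i) ^ q = x + y * i ^ q := by
  have := Fintype.ofFinite L
  lift x to L using hx
  lift y to L using hy
  rw [← hL, Nat.card_eq_fintype_card]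
  have h := map_add (FiniteField.frobeniusAlgHom L F) (algebraMap L F x) (algebraMap L F y * i)
  simp only [map_mul, AlgHom.commutes, FiniteField.coe_frobeniusAlgHom] at h
  exact h

theorem pow_card_add_one_eq_sq_add_sq (hL : Nat.card L = q) {i : F} (hi : i ^ 2 = -1)
    (hiq : i ^ q = -i) {x y : F} (hx : x ∈ L) (hy : y ∈ L) :
    (x + y * i) ^ (q + 1) = x ^ 2 + y ^ 2 := by
  rw [pow_succ, L.pow_card_add_mul hL hx hy, hiq]
  linear_combination (-y ^ 2) * hi

theorem pow_card_add_one_mem [Finite F] (hL : Nat.card L = q) (hF : Nat.card F = q ^ 2) (x : F) :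
    x ^ (q + 1) ∈ L := by
  have hq : 1 < q := hL ▸ Finite.one_lt_card
  have hexp : (Nat.card F - 1) / (Nat.card L - 1) = q + 1 := by
    rw [hF, hL, ← one_pow 2, Nat.sq_sub_sq, one_pow, Nat.mul_div_cancel _ (by omega)]
  rw [← hexp, ← FiniteField.algebraMap_norm_eq_pow]
  exact (Algebra.norm L x).2

theorem exists_sq_eq_mul (hL : Nat.card L = q) (hq : Odd q) {a b : F} (ha : a ∈ L)
    (hapow : a ^ (q / 2) = -1) (hb : b ∈ L) (hbns : ¬∃ w ∈ L, b = w ^ 2) :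
    ∃ σ ∈ L, σ ^ 2 = a * b := by
  have := Fintype.ofFinite L
  rw [← hL, Nat.card_eq_fintype_card] at hapow hq
  have hchar : ringChar L ≠ 2 := by
    rw [Ne, FiniteField.even_card_iff_char_two, ← Nat.even_iff]
    exact Nat.not_even_iff_odd.mpr hq
  lift a to L using ha
  lift b to L using hb
  have haL : a ^ (Fintype.card L / 2) = -1 := Subtype.ext (by simpa using hapow)
  have hbL : ¬IsSquare b := by
    rintro ⟨w, rfl⟩
    exact hbns ⟨w, w.2, by push_cast; ring⟩
  obtain ⟨σ, hσ⟩ := FiniteField.isSquare_mul_of_pow_card_div_two_eq_neg_one hchar haL hbL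
  exact ⟨σ, σ.2, by rw [sq, ← Subfield.coe_mul, ← hσ]; rfl⟩

end Subfield

theorem FiniteField.exists_sq_eq_neg_one_pow_eq_neg [Fintype F] {q : ℕ}
    (hF : Fintype.card F = q ^ 2) (hq : q % 4 = 3) : ∃ i : F, i ^ 2 = -1 ∧ i ^ q = -i := by
  obtain ⟨i, hi⟩ : IsSquare (-1 : F) := by
    rw [FiniteField.isSquare_neg_one_iff, hF, Nat.pow_mod, hq]
    decide
  have hi2 : i ^ 2 = -1 := by rw [hi, sq]
  refine ⟨i, hi2, ?_⟩
  rw [← Nat.div_add_mod q 4, hq, pow_add, pow_mul, show i ^ 4 = (i ^ 2) ^ 2 by ring, hi2]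
  linear_combination i * hi2

theorem Subgroup.exists_val_eq_of_pow_eq_one [Finite F] (H : Subgroup Fˣ) {n : ℕ}
    (hn : n ∣ Nat.card H) {z : F} (hz : z ^ n = 1) : ∃ h ∈ H, (h : F) = z := by
  have hn0 : n ≠ 0 := by rintro rfl; exact Nat.card_pos.ne' (Nat.eq_zero_of_zero_dvd hn)
  have hz0 : z ≠ 0 := by rintro rfl; exact zero_ne_one ((zero_pow hn0).symm.trans hz)
  refine ⟨Units.mk0 z hz0, H.mem_of_pow_card_eq_one ?_, rfl⟩
  obtain ⟨k, hk⟩ := hn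
  ext
  simp [hk, pow_mul, hz]

end

theorem propertyPi_odd_of_system_general (q ℓ : ℕ) (hℓ : 3 ≤ ℓ)
    (hqmod : q ≡ 2 ^ ℓ - 1 [MOD 2 ^ (ℓ + 1)])
    (F : Type*) [Field F] [Fintype F] (hF : Fintype.card F = q ^ 2)
    (L : Subfield F) (hL : Nat.card L = q)
    (m : ℕ)
    (Hm : Subgroup Fˣ) (hHm : Nat.card Hm = m * (q + 1))
    (D : F) (hDL : D ∈ L) (hD0 : D ≠ 0) (hDns : ¬ ∃ w ∈ L, D = w ^ 2)
    (hsys : ∀ α : F, α ∈ L → α ≠ 0 →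
      ∃ x1 x2 x3 y1 y2 y3 : F,
        x1 ∈ L ∧ x2 ∈ L ∧ x3 ∈ L ∧ y1 ∈ L ∧ y2 ∈ L ∧ y3 ∈ L ∧
        x1 + x2 + x3 = α ∧ y1 + y2 + y3 = 0 ∧
        x1 ^ 2 + y1 ^ 2 = D ∧ x2 ^ 2 + y2 ^ 2 = D ∧ x3 ^ 2 + y3 ^ 2 = D) :
    ∀ γ : Fˣ, (γ ^ (q - 1)) ^ 2 ^ ℓ = 1 → (γ ^ (q - 1)) ^ 2 ^ (ℓ - 1) ≠ 1 →
      ∃ h1 h2 h3 : Fˣ, h1 ∈ Hm ∧ h2 ∈ Hm ∧ h3 ∈ Hm ∧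
        (h1 : F) + (h2 : F) + (h3 : F) = (γ : F) := by
  intro γ hγ hγ'
  obtain ⟨t, ht, hqt⟩ := Nat.exists_odd_add_one_eq_two_pow_mul hqmod
  have hq4 : q % 4 = 3 := by
    have : 4 ∣ q + 1 := hqt ▸ (pow_dvd_pow 2 (by omega : 2 ≤ ℓ)).mul_right t
    omega
  have hb : ((γ : F) ^ (q + 1)) ^ (q / 2) = -1 := by
    rw [show q / 2 = (q - 1) / 2 by omega]
    refine pow_add_one_pow_div_two_eq_neg_one (by omega) ht hqt
      (pow_two_pow_pred_eq_neg_one (by omega) ?_ ?_)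
    · simpa using congrArg Units.val hγ
    · simpa [← Units.val_pow_eq_pow_val] using hγ'
  obtain ⟨σ, hσL, hσ⟩ := L.exists_sq_eq_mul hL (Nat.odd_iff.mpr (by omega))
    (L.pow_card_add_one_mem hL (by rw [Nat.card_eq_fintype_card, hF]) γ) hb hDL hDns
  have hσ0 : σ ≠ 0 := by rintro rfl; simp [hD0] at hσ
  obtain ⟨i, hi, hiq⟩ := FiniteField.exists_sq_eq_neg_one_pow_eq_neg hF hq4
  have hmem : ∀ {x y : F}, x ∈ L → y ∈ L → x ^ 2 + y ^ 2 = D →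
      ∃ h ∈ Hm, (h : F) = γ / σ * (x + y * i) := by
    intro x y hx hy hxy
    refine Hm.exists_val_eq_of_pow_eq_one (hHm ▸ dvd_mul_left _ _) ?_
    rw [mul_pow, div_pow, L.pow_card_add_one_eq_sq_add_sq hL hi hiq hx hy, hxy, pow_succ σ,
      L.pow_card_eq_self hL hσL, ← sq, hσ]
    field_simp
  obtain ⟨x1, x2, x3, y1, y2, y3, hx1, hx2, hx3, hy1, hy2, hy3, hx, hy, hd1, hd2, hd3⟩ :=
    hsys σ hσL hσ0
  obtain ⟨h1, hh1, e1⟩ := hmem hx1 hy1 hd1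
  obtain ⟨h2, hh2, e2⟩ := hmem hx2 hy2 hd2
  obtain ⟨h3, hh3, e3⟩ := hmem hx3 hy3 hd3
  refine ⟨h1, h2, h3, hh1, hh2, hh3, ?_⟩
  rw [e1, e2, e3, ← mul_add, ← mul_add]
  field_simp
  linear_combination hx + i * hy

/-- Standard setup, `ℓ ≥ 3`, `q ≡ 2^ℓ − 1 (mod 2^(ℓ+1))`, `D` a nonzero non-square
of the subfield `L` of cardinality `q`. If for every nonzero `α ∈ L` the system
`x1+x2+x3 = α`, `y1+y2+y3 = 0`, `xi² + yi² = D` is solvable in `L`, then every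
`γ ∈ Fˣ` with `(γ^(q−1))^(2^ℓ) = 1` and `(γ^(q−1))^(2^(ℓ−1)) ≠ 1` is a sum of
three elements of `H_m`. -/
theorem propertyPi_odd_of_system (q0 s q ℓ : ℕ) (hq0 : IsPrimePow q0)
    (hq0odd : Odd q0) (hs : Odd s) (hq : q = q0 ^ s) (hℓ : 3 ≤ ℓ)
    (hqmod : q ≡ 2 ^ ℓ - 1 [MOD 2 ^ (ℓ + 1)])
    (F : Type*) [Field F] [Fintype F] (hF : Fintype.card F = q ^ 2)
    (L : Subfield F) (hL : Nat.card L = q)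
    (m : ℕ) (hm : m = (q0 - 1) / 2)
    (Hm : Subgroup Fˣ) (hHm : Nat.card Hm = m * (q + 1))
    (D : F) (hDL : D ∈ L) (hD0 : D ≠ 0) (hDns : ¬ ∃ w ∈ L, D = w ^ 2)
    (hsys : ∀ α : F, α ∈ L → α ≠ 0 →
      ∃ x1 x2 x3 y1 y2 y3 : F,
        x1 ∈ L ∧ x2 ∈ L ∧ x3 ∈ L ∧ y1 ∈ L ∧ y2 ∈ L ∧ y3 ∈ L ∧
        x1 + x2 + x3 = α ∧ y1 + y2 + y3 = 0 ∧
        x1 ^ 2 + y1 ^ 2 = D ∧ x2 ^ 2 + y2 ^ 2 = D ∧ x3 ^ 2 + y3 ^ 2 = D) :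
    ∀ γ : Fˣ, (γ ^ (q - 1)) ^ 2 ^ ℓ = 1 → (γ ^ (q - 1)) ^ 2 ^ (ℓ - 1) ≠ 1 →
      ∃ h1 h2 h3 : Fˣ, h1 ∈ Hm ∧ h2 ∈ Hm ∧ h3 ∈ Hm ∧
        (h1 : F) + (h2 : F) + (h3 : F) = (γ : F) :=
  propertyPi_odd_of_system_general q ℓ hℓ hqmod F hF L hL m Hm hHm D hDL hD0 hDns hsys
end

section
/- Let F_q be a finite field of odd characteristic and let α ∈ F_q with α ≠ 0 and α² ≠ 1. Define polynomials a(x) = 2αx − α² − 1, b(x) = 2αx² + (−3α² − 1)x + α³ + α, c(x) = (−α² − 1)x² + (α³ + α)x − α⁴/4 − α²/2 + 3/4, and Δ(x) = b(x)² − 4a(x)c(x) in F_q[x]. Assume there exists x1 ∈ F_q such that (i) 1 − x1² is a nonzero square in F_q, (ii) a(x1) ≠ 0, and (iii) Δ(x1) is a nonzero square in F_q. Then there exist x2, x3, y1, y2, y3 ∈ F_q such that x1 + x2 + x3 = α, y1 + y2 + y3 = 0, x1² + y1² = 1, x2² + y2² = 1, and x3² + y3² = 1. -/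
/-!
Take `y1 = w` with `w² = 1 - x1²`; it remains to write `(s, t) = (α - x1, w)` as a sum of two
unit vectors and negate their `y`-coordinates. With `m = s² + t² = -a(x1)` these are
`((s ∓ k t)/2, (t ± k s)/2)` for any `k` with `k² m = 4 - m`. Such `k` exists because
`Δ(x) = (1 - x²) · (-a(x)) · (4 + a(x))`, so `Δ(x1) = w² · m(4 - m)` and `k = √Δ(x1) / (w m)`.
-/

theorem exists_unit_vectors_add_eq {F : Type*} [Field F] (h2 : (2 : F) ≠ 0) {s t u : F}
    (hm : s ^ 2 + t ^ 2 ≠ 0) (hu : u ^ 2 = (s ^ 2 + t ^ 2) * (4 - (s ^ 2 + t ^ 2))) :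
    ∃ x2 y2 x3 y3 : F, x2 + x3 = s ∧ y2 + y3 = t ∧
      x2 ^ 2 + y2 ^ 2 = 1 ∧ x3 ^ 2 + y3 ^ 2 = 1 := by
  set k := u / (s ^ 2 + t ^ 2)
  have hk : k ^ 2 * (s ^ 2 + t ^ 2) = 4 - (s ^ 2 + t ^ 2) := by
    simp only [k, div_pow, hu]
    field_simp
  refine ⟨(s - k * t) / 2, (t + k * s) / 2, (s + k * t) / 2, (t - k * s) / 2,
    by field_simp; ring, by field_simp; ring, ?_, ?_⟩ <;>
  · field_simp
    linear_combination hk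

theorem system_even_discriminant_eq {F : Type*} [Field F] (h2 : (2 : F) ≠ 0) (α x : F) :
    (2 * α * x ^ 2 + (-3 * α ^ 2 - 1) * x + α ^ 3 + α) ^ 2 -
        4 * (2 * α * x - α ^ 2 - 1) *
          ((-α ^ 2 - 1) * x ^ 2 + (α ^ 3 + α) * x - α ^ 4 / 4 - α ^ 2 / 2 + 3 / 4) =
      (1 - x ^ 2) * ((α - x) ^ 2 + (1 - x ^ 2)) * (4 - ((α - x) ^ 2 + (1 - x ^ 2))) := by
  have h4 : (4 : F) ≠ 0 := by
    simpa only [show (4 : F) = 2 * 2 by norm_num] using mul_ne_zero h2 h2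
  field_simp
  ring

theorem system_even_solvable_of_discriminant_general (F : Type*) [Field F]
    (hchar : ringChar F ≠ 2) (α : F)
    (x1 : F)
    (h1 : 1 - x1 ^ 2 ≠ 0 ∧ ∃ w : F, 1 - x1 ^ 2 = w ^ 2)
    (h2 : 2 * α * x1 - α ^ 2 - 1 ≠ 0)
    (h3 : (2 * α * x1 ^ 2 + (-3 * α ^ 2 - 1) * x1 + α ^ 3 + α) ^ 2 -
        4 * (2 * α * x1 - α ^ 2 - 1) *
          ((-α ^ 2 - 1) * x1 ^ 2 + (α ^ 3 + α) * x1
            - α ^ 4 / 4 - α ^ 2 / 2 + 3 / 4) ≠ 0 ∧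
      ∃ w : F, (2 * α * x1 ^ 2 + (-3 * α ^ 2 - 1) * x1 + α ^ 3 + α) ^ 2 -
        4 * (2 * α * x1 - α ^ 2 - 1) *
          ((-α ^ 2 - 1) * x1 ^ 2 + (α ^ 3 + α) * x1
            - α ^ 4 / 4 - α ^ 2 / 2 + 3 / 4) = w ^ 2) :
    ∃ x2 x3 y1 y2 y3 : F,
      x1 + x2 + x3 = α ∧ y1 + y2 + y3 = 0 ∧
      x1 ^ 2 + y1 ^ 2 = 1 ∧ x2 ^ 2 + y2 ^ 2 = 1 ∧ x3 ^ 2 + y3 ^ 2 = 1 := by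
  obtain ⟨hx1, w, hw⟩ := h1
  obtain ⟨-, v, hv⟩ := h3
  have h2F : (2 : F) ≠ 0 := Ring.two_ne_zero hchar
  have hw0 : w ≠ 0 := by rintro rfl; exact hx1 (by simpa using hw)
  rw [system_even_discriminant_eq h2F, hw] at hv
  have hm : (α - x1) ^ 2 + w ^ 2 ≠ 0 := by
    rw [← hw]; contrapose! h2; linear_combination -h2
  obtain ⟨x2, y2, x3, y3, hx, hy, hc2, hc3⟩ :=
    exists_unit_vectors_add_eq (u := v / w) h2F hm (by field_simp; linear_combination -hv)
  exact ⟨x2, x3, w, -y2, -y3, by linear_combination hx, by linear_combination -hy,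
    by linear_combination -hw, by linear_combination hc2, by linear_combination hc3⟩

/-- Finite field of odd characteristic, `α ≠ 0`, `α² ≠ 1`. With
`a(x) = 2αx − α² − 1`, `b(x) = 2αx² + (−3α² − 1)x + α³ + α`,
`c(x) = (−α² − 1)x² + (α³ + α)x − α⁴/4 − α²/2 + 3/4` and `Δ = b² − 4ac`:
if there is `x1` with `1 − x1²` a nonzero square, `a(x1) ≠ 0` and `Δ(x1)` a
nonzero square, then the system of the even case is solvable. -/
theorem system_even_solvable_of_discriminant (F : Type*) [Field F] [Fintype F]
    (hchar : ringChar F ≠ 2) (α : F) (hα : α ≠ 0) (hα1 : α ^ 2 ≠ 1)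
    (x1 : F)
    (h1 : 1 - x1 ^ 2 ≠ 0 ∧ ∃ w : F, 1 - x1 ^ 2 = w ^ 2)
    (h2 : 2 * α * x1 - α ^ 2 - 1 ≠ 0)
    (h3 : (2 * α * x1 ^ 2 + (-3 * α ^ 2 - 1) * x1 + α ^ 3 + α) ^ 2 -
        4 * (2 * α * x1 - α ^ 2 - 1) *
          ((-α ^ 2 - 1) * x1 ^ 2 + (α ^ 3 + α) * x1
            - α ^ 4 / 4 - α ^ 2 / 2 + 3 / 4) ≠ 0 ∧
      ∃ w : F, (2 * α * x1 ^ 2 + (-3 * α ^ 2 - 1) * x1 + α ^ 3 + α) ^ 2 -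
        4 * (2 * α * x1 - α ^ 2 - 1) *
          ((-α ^ 2 - 1) * x1 ^ 2 + (α ^ 3 + α) * x1
            - α ^ 4 / 4 - α ^ 2 / 2 + 3 / 4) = w ^ 2) :
    ∃ x2 x3 y1 y2 y3 : F,
      x1 + x2 + x3 = α ∧ y1 + y2 + y3 = 0 ∧
      x1 ^ 2 + y1 ^ 2 = 1 ∧ x2 ^ 2 + y2 ^ 2 = 1 ∧ x3 ^ 2 + y3 ^ 2 = 1 :=
  system_even_solvable_of_discriminant_general F hchar α x1 h1 h2 h3
end

section
/- Let F_q be a finite field of odd characteristic, let D ∈ F_q be a nonzero element that is not a square in F_q, and let α ∈ F_q with α ≠ 0. Define polynomials a(x) = 2αx − α² − D, b(x) = 2αx² + (−3α² − D)x + α³ + Dα, c(x) = (−α² − D)x² + (α³ + Dα)x − α⁴/4 − Dα²/2 + 3D²/4, and Δ(x) = b(x)² − 4a(x)c(x) in F_q[x]. Assume there exists x1 ∈ F_q such that (i) D − x1² is a nonzero square in F_q, (ii) a(x1) ≠ 0, and (iii) Δ(x1) is a nonzero square in F_q. Then there exist x2, x3, y1, y2, y3 ∈ F_q such that x1 + x2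 + x3 = α, y1 + y2 + y3 = 0, x1² + y1² = D, x2² + y2² = D, and x3² + y3² = D. -/
/-!
Put `x3 = α - x1 - x2` and `y3 = -(y1 + y2)`. Given `x1² + y1² = x2² + y2² = D`, the third
equation `x3² + y3² = D` becomes `2 y1 y2 = x1² + x2² - x3² - D`, which (with `y1 ≠ 0`) can be
solved for `y2` consistently with `x2² + y2² = D` exactly when
`(x1² + x2² - x3² - D)² = 4 (D - x1²)(D - x2²)`. As a polynomial in `x2` this condition is
`-4 (a x2² + b x2 + c)`, with `a, b, c` the coefficients `a(x1), b(x1), c(x1)` of the statement,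
so a root `x2` exists because `a(x1) ≠ 0` and the discriminant `Δ(x1)` is a square.
-/

namespace OddSystem

variable {F : Type*} [Field F]

def coeffA (D α x : F) : F := 2 * α * x - α ^ 2 - D

def coeffB (D α x : F) : F := 2 * α * x ^ 2 + (-3 * α ^ 2 - D) * x + α ^ 3 + D * α

def coeffC (D α x : F) : F :=
  (-α ^ 2 - D) * x ^ 2 + (α ^ 3 + D * α) * x - α ^ 4 / 4 - D * α ^ 2 / 2 + 3 * D ^ 2 / 4

theorem circle_defect_eq [NeZero (2 : F)] (D α x1 x2 : F) :
    (x1 ^ 2 + x2 ^ 2 - (α - x1 - x2) ^ 2 - D) ^ 2 - 4 * (D - x1 ^ 2) * (D - x2 ^ 2) =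
      -4 * (coeffA D α x1 * (x2 * x2) + coeffB D α x1 * x2 + coeffC D α x1) := by
  have h4 : (4 : F) ≠ 0 := by
    have := pow_ne_zero 2 (two_ne_zero' F)
    norm_num at this
    exact this
  unfold coeffA coeffB coeffC
  field_simp
  ring

theorem exists_circle_points_of_sq_eq [NeZero (2 : F)] {D x1 y1 x2 x3 : F}
    (hxy1 : x1 ^ 2 + y1 ^ 2 = D) (hy1 : y1 ≠ 0)
    (h : (x1 ^ 2 + x2 ^ 2 - x3 ^ 2 - D) ^ 2 = 4 * (D - x1 ^ 2) * (D - x2 ^ 2)) :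
    ∃ y2 y3 : F, y1 + y2 + y3 = 0 ∧ x2 ^ 2 + y2 ^ 2 = D ∧ x3 ^ 2 + y3 ^ 2 = D := by
  have h2y1 : 2 * y1 ≠ 0 := mul_ne_zero two_ne_zero hy1
  obtain ⟨y2, hy2⟩ : ∃ y2, 2 * y1 * y2 = x1 ^ 2 + x2 ^ 2 - x3 ^ 2 - D :=
    ⟨_ / (2 * y1), mul_div_cancel₀ _ h2y1⟩
  have hxy2 : x2 ^ 2 + y2 ^ 2 = D := by
    apply mul_left_cancel₀ (pow_ne_zero 2 h2y1)
    linear_combination (2 * y1 * y2 + (x1 ^ 2 + x2 ^ 2 - x3 ^ 2 - D)) * hy2 + h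
      - 4 * (D - x2 ^ 2) * hxy1
  exact ⟨y2, -(y1 + y2), by ring, hxy2, by linear_combination hy2 + hxy2 + hxy1⟩

end OddSystem

open OddSystem in
theorem system_odd_solvable_of_discriminant_general (F : Type*) [Field F]
    (hchar : ringChar F ≠ 2) (D : F) (α : F) (x1 : F)
    (h1 : D - x1 ^ 2 ≠ 0 ∧ ∃ w : F, D - x1 ^ 2 = w ^ 2)
    (h2 : 2 * α * x1 - α ^ 2 - D ≠ 0)
    (h3 : (2 * α * x1 ^ 2 + (-3 * α ^ 2 - D) * x1 + α ^ 3 + D * α) ^ 2 -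
        4 * (2 * α * x1 - α ^ 2 - D) *
          ((-α ^ 2 - D) * x1 ^ 2 + (α ^ 3 + D * α) * x1
            - α ^ 4 / 4 - D * α ^ 2 / 2 + 3 * D ^ 2 / 4) ≠ 0 ∧
      ∃ w : F, (2 * α * x1 ^ 2 + (-3 * α ^ 2 - D) * x1 + α ^ 3 + D * α) ^ 2 -
        4 * (2 * α * x1 - α ^ 2 - D) *
          ((-α ^ 2 - D) * x1 ^ 2 + (α ^ 3 + D * α) * x1
            - α ^ 4 / 4 - D * α ^ 2 / 2 + 3 * D ^ 2 / 4) = w ^ 2) :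
    ∃ x2 x3 y1 y2 y3 : F,
      x1 + x2 + x3 = α ∧ y1 + y2 + y3 = 0 ∧
      x1 ^ 2 + y1 ^ 2 = D ∧ x2 ^ 2 + y2 ^ 2 = D ∧ x3 ^ 2 + y3 ^ 2 = D := by
  have : NeZero (2 : F) := ⟨Ring.two_ne_zero hchar⟩
  obtain ⟨hDx1, y1, hy1_sq⟩ := h1
  have hxy1 : x1 ^ 2 + y1 ^ 2 = D := by linear_combination -hy1_sq
  have hy1 : y1 ≠ 0 := by rintro rfl; exact hDx1 (by simpa using hy1_sq)
  obtain ⟨w, hw⟩ := h3.2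
  obtain ⟨x2, hx2⟩ := exists_quadratic_eq_zero (a := coeffA D α x1) (b := coeffB D α x1)
    (c := coeffC D α x1) h2 ⟨w, by rw [discrim, ← sq]; exact hw⟩
  have hdefect := circle_defect_eq D α x1 x2
  rw [hx2, mul_zero, sub_eq_zero] at hdefect
  obtain ⟨y2, y3, hsum, hxy2, hxy3⟩ := exists_circle_points_of_sq_eq hxy1 hy1 hdefect
  exact ⟨x2, α - x1 - x2, y1, y2, y3, by ring, hsum, hxy1, hxy2, hxy3⟩

/-- Finite field of odd characteristic, `D` a nonzero non-square, `α ≠ 0`. With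
`a(x) = 2αx − α² − D`, `b(x) = 2αx² + (−3α² − D)x + α³ + Dα`,
`c(x) = (−α² − D)x² + (α³ + Dα)x − α⁴/4 − Dα²/2 + 3D²/4` and `Δ = b² − 4ac`:
if there is `x1` with `D − x1²` a nonzero square, `a(x1) ≠ 0` and `Δ(x1)` a
nonzero square, then the system of the odd case is solvable. -/
theorem system_odd_solvable_of_discriminant (F : Type*) [Field F] [Fintype F]
    (hchar : ringChar F ≠ 2) (D : F) (hD0 : D ≠ 0) (hDns : ¬ ∃ w : F, D = w ^ 2)
    (α : F) (hα : α ≠ 0) (x1 : F)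
    (h1 : D - x1 ^ 2 ≠ 0 ∧ ∃ w : F, D - x1 ^ 2 = w ^ 2)
    (h2 : 2 * α * x1 - α ^ 2 - D ≠ 0)
    (h3 : (2 * α * x1 ^ 2 + (-3 * α ^ 2 - D) * x1 + α ^ 3 + D * α) ^ 2 -
        4 * (2 * α * x1 - α ^ 2 - D) *
          ((-α ^ 2 - D) * x1 ^ 2 + (α ^ 3 + D * α) * x1
            - α ^ 4 / 4 - D * α ^ 2 / 2 + 3 * D ^ 2 / 4) ≠ 0 ∧
      ∃ w : F, (2 * α * x1 ^ 2 + (-3 * α ^ 2 - D) * x1 + α ^ 3 + D * α) ^ 2 -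
        4 * (2 * α * x1 - α ^ 2 - D) *
          ((-α ^ 2 - D) * x1 ^ 2 + (α ^ 3 + D * α) * x1
            - α ^ 4 / 4 - D * α ^ 2 / 2 + 3 * D ^ 2 / 4) = w ^ 2) :
    ∃ x2 x3 y1 y2 y3 : F,
      x1 + x2 + x3 = α ∧ y1 + y2 + y3 = 0 ∧
      x1 ^ 2 + y1 ^ 2 = D ∧ x2 ^ 2 + y2 ^ 2 = D ∧ x3 ^ 2 + y3 ^ 2 = D :=
  system_odd_solvable_of_discriminant_general F hchar D α x1 h1 h2 h3
end

section
/- Let F_q be a finite field of odd characteristic and let α ∈ F_q with α ≠ 0 and α² ≠ 1. Define polynomials a(x) = 2αx − α² − 1, b(x) = 2αx² + (−3α² − 1)x + α³ + α, c(x) = (−α² − 1)x² + (α³ + α)x − α⁴/4 − α²/2 + 3/4, and Δ(x) = b(x)² − 4a(x)c(x) in F_q[x]. Then there is no polynomial f(x) with coefficients in the algebraic closure of F_q such that Δ(x) = f(x)² (i.e., the image of Δ in (algebraic closure of F_q)[x] is not the square of a polynomial). -/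
/-!
Writing `r = (α² + 1) / (2α)`, the discriminant factors as
`Δ = 4α² (x - 1)(x + 1)(x - (α² - 3)/(2α))(x - r)`, and the cofactor of `x - r` takes the value
`2(α² - 1)²/α ≠ 0` at `r`. So `r` is a simple root of `Δ`, whereas every root of a square is at
least double.
-/

open Polynomial

theorem Polynomial.not_isSquare_X_sub_C_mul {R : Type*} [CommRing R] [IsDomain R] {a : R}
    {q : R[X]} (hq : ¬ q.IsRoot a) : ¬ IsSquare ((X - C a) * q) := by
  rintro ⟨f, hf⟩
  have hfa : f.IsRoot a := by
    have := congrArg (eval a) hf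
    simp only [eval_mul, eval_sub, eval_X, eval_C, sub_self, zero_mul] at this
    exact mul_self_eq_zero.mp this.symm
  obtain ⟨g, rfl⟩ := dvd_iff_isRoot.mpr hfa
  have hqg : q = g * ((X - C a) * g) := by
    apply mul_left_cancel₀ (X_sub_C_ne_zero a)
    rw [hf]
    ring
  apply hq
  simp [hqg]

section DiscriminantPoly

variable {K : Type*} [Field K]

noncomputable def discriminantPoly (α : K) : K[X] :=
  (C (2 * α) * X ^ 2 + C (-3 * α ^ 2 - 1) * X + C (α ^ 3 + α)) ^ 2 -
    C 4 * (C (2 * α) * X + C (-α ^ 2 - 1)) *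
      (C (-α ^ 2 - 1) * X ^ 2 + C (α ^ 3 + α) * X + C (-(α ^ 4) / 4 - α ^ 2 / 2 + 3 / 4))

theorem map_discriminantPoly {L : Type*} [Field L] (φ : K →+* L) (α : K) :
    (discriminantPoly α).map φ = discriminantPoly (φ α) := by
  simp only [discriminantPoly, Polynomial.map_sub, Polynomial.map_add, Polynomial.map_mul,
    Polynomial.map_pow, map_C, map_X]
  simp only [map_mul, map_add, map_sub, map_neg, map_pow, map_div₀, map_ofNat, map_one]

theorem discriminantPoly_eq_mul [Infinite K] (h2 : (2 : K) ≠ 0) {α : K} (hα : α ≠ 0) :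
    discriminantPoly α = (X - C ((α ^ 2 + 1) / (2 * α))) *
      (C (4 * α ^ 2) * (X - 1) * (X + 1) * (X - C ((α ^ 2 - 3) / (2 * α)))) := by
  refine Polynomial.funext fun x => ?_
  have h4 : (4 : K) ≠ 0 := by simpa [two_mul, ← two_add_two_eq_four] using mul_ne_zero h2 h2
  simp only [discriminantPoly, eval_sub, eval_add, eval_mul, eval_pow, eval_C, eval_X, eval_one]
  field_simp
  ring

theorem eval_discriminantPoly_cofactor (h2 : (2 : K) ≠ 0) {α : K} (hα : α ≠ 0) :
    (C (4 * α ^ 2) * (X - 1) * (X + 1) * (X - C ((α ^ 2 - 3) / (2 * α)))).eval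
      ((α ^ 2 + 1) / (2 * α)) = 2 * (α ^ 2 - 1) ^ 2 / α := by
  simp only [eval_sub, eval_add, eval_mul, eval_C, eval_X, eval_one]
  field_simp
  ring

theorem not_isSquare_discriminantPoly [Infinite K] (h2 : (2 : K) ≠ 0) {α : K} (hα : α ≠ 0)
    (hα1 : α ^ 2 ≠ 1) : ¬ IsSquare (discriminantPoly α) := by
  rw [discriminantPoly_eq_mul h2 hα]
  apply not_isSquare_X_sub_C_mul
  rw [IsRoot, eval_discriminantPoly_cofactor h2 hα]
  exact div_ne_zero (mul_ne_zero h2 (pow_ne_zero 2 (sub_ne_zero.mpr hα1))) hα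

end DiscriminantPoly

theorem discriminant_even_not_square_general (F : Type*) [Field F]
    (hchar : ringChar F ≠ 2) (α : F) (hα : α ≠ 0) (hα1 : α ^ 2 ≠ 1) :
    ¬ ∃ f : Polynomial (AlgebraicClosure F),
      Polynomial.map (algebraMap F (AlgebraicClosure F))
        ((C (2 * α) * X ^ 2 + C (-3 * α ^ 2 - 1) * X + C (α ^ 3 + α)) ^ 2 -
          C 4 * (C (2 * α) * X + C (-α ^ 2 - 1)) *
            (C (-α ^ 2 - 1) * X ^ 2 + C (α ^ 3 + α) * X +
              C (-(α ^ 4) / 4 - α ^ 2 / 2 + 3 / 4))) = f ^ 2 := by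
  rintro ⟨f, hf⟩
  set φ := algebraMap F (AlgebraicClosure F)
  have h2 : (2 : AlgebraicClosure F) ≠ 0 := by
    simpa only [map_ofNat, map_zero] using (map_ne_zero φ).mpr (Ring.two_ne_zero hchar)
  have hφα1 : φ α ^ 2 ≠ 1 := by
    simpa using φ.injective.ne hα1
  refine not_isSquare_discriminantPoly h2 ((map_ne_zero φ).mpr hα) hφα1 ⟨f, ?_⟩
  rw [← map_discriminantPoly]
  exact hf.trans (sq f)

/-- Finite field of odd characteristic, `α ≠ 0`, `α² ≠ 1`. The discriminant
polynomial `Δ(x) = b(x)² − 4a(x)c(x)`, with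
`a(x) = 2αx − α² − 1`, `b(x) = 2αx² + (−3α² − 1)x + α³ + α`,
`c(x) = (−α² − 1)x² + (α³ + α)x − α⁴/4 − α²/2 + 3/4`,
is not the square of any polynomial over the algebraic closure of `F`. -/
theorem discriminant_even_not_square (F : Type*) [Field F] [Fintype F]
    (hchar : ringChar F ≠ 2) (α : F) (hα : α ≠ 0) (hα1 : α ^ 2 ≠ 1) :
    ¬ ∃ f : Polynomial (AlgebraicClosure F),
      Polynomial.map (algebraMap F (AlgebraicClosure F))
        ((C (2 * α) * X ^ 2 + C (-3 * α ^ 2 - 1) * X + C (α ^ 3 + α)) ^ 2 -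
          C 4 * (C (2 * α) * X + C (-α ^ 2 - 1)) *
            (C (-α ^ 2 - 1) * X ^ 2 + C (α ^ 3 + α) * X +
              C (-(α ^ 4) / 4 - α ^ 2 / 2 + 3 / 4))) = f ^ 2 :=
  discriminant_even_not_square_general F hchar α hα hα1
end

section
/- Let F_q be a finite field whose cardinality q satisfies q ≡ 7 (mod 8). Then for every α ∈ F_q with α ≠ 0 there exist x1, x2, x3, y1, y2, y3 ∈ F_q satisfying x1 + x2 + x3 = α, y1 + y2 + y3 = 0, x1² + y1² = 1, x2² + y2² = 1, and x3² + y3² = 1. -/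
/-!
Put `(x₃, y₃) = (a, b)` on the circle `x² + y² = 1`. The remaining vector `w = (α - a, -b)`
has `w₁² + w₂² = α² + 1 - 2αa`, and it is the sum of two points of the circle as soon as this
equals `2 + 2c` for an abscissa `c ≠ -1` of the circle. Since `q ≡ 3 (mod 4)`, `-1` is not a
square, and the rational parametrization `t ↦ (1 - t²) / (1 + t²)` together with `-1` shows
that the circle has at least `(q + 3) / 2` abscissas. The abscissas `c` and the values
`(α² - 1) / 2 - αa` are two subsets of `F` of this size, so they share at least two elements,
one of them different from `-1`.
-/

open Finset

lemma Finset.exists_mem_inter_ne {α : Type*} [Fintype α] [DecidableEq α] {s t : Finset α}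
    (h : Fintype.card α + 1 < #s + #t) (a : α) : ∃ b ∈ s ∩ t, b ≠ a := by
  refine exists_mem_ne ?_ a
  have := card_union_add_card_inter s t
  have := card_le_univ (s ∪ t)
  omega

section Circle

variable {F : Type*} [Field F]

lemma two_ne_zero_of_not_isSquare_neg_one (h : ¬IsSquare (-1 : F)) : (2 : F) ≠ 0 :=
  fun h2 ↦ h ⟨1, by linear_combination -h2⟩

lemma one_add_sq_ne_zero_of_not_isSquare_neg_one (h : ¬IsSquare (-1 : F)) (t : F) :
    1 + t ^ 2 ≠ 0 :=
  fun ht ↦ h ⟨t, by linear_combination -ht⟩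

/-- `w` has the length of `(1 + c, d)`; with the slope `t = d / (1 + c)` it splits as
`(w + t J w) / 2 + (w - t J w) / 2`, `J` the rotation by a right angle. -/
lemma exists_circle_add_circle_eq (h2 : (2 : F) ≠ 0) {c d w₁ w₂ : F} (hcd : c ^ 2 + d ^ 2 = 1)
    (hc : 1 + c ≠ 0) (hw : w₁ ^ 2 + w₂ ^ 2 = 2 + 2 * c) :
    ∃ x₁ y₁ x₂ y₂ : F, x₁ + x₂ = w₁ ∧ y₁ + y₂ = w₂ ∧
      x₁ ^ 2 + y₁ ^ 2 = 1 ∧ x₂ ^ 2 + y₂ ^ 2 = 1 := by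
  set t := d / (1 + c)
  have ht : (1 + t ^ 2) * (1 + c) = 2 := by
    simp only [t]
    field_simp
    linear_combination hcd
  refine ⟨(w₁ - t * w₂) / 2, (w₂ + t * w₁) / 2, (w₁ + t * w₂) / 2, (w₂ - t * w₁) / 2,
    by field_simp; ring, by field_simp; ring, ?_, ?_⟩ <;>
  · field_simp
    linear_combination (1 + t ^ 2) * hw + 2 * ht

def circleParam (t : F) : F := (1 - t ^ 2) / (1 + t ^ 2)

lemma circleParam_sq_add_sq (h : ¬IsSquare (-1 : F)) (t : F) :
    circleParam t ^ 2 + (2 * t / (1 + t ^ 2)) ^ 2 = 1 := by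
  have := one_add_sq_ne_zero_of_not_isSquare_neg_one h t
  simp only [circleParam]
  field_simp
  ring

lemma circleParam_ne_neg_one (h : ¬IsSquare (-1 : F)) (t : F) : circleParam t ≠ -1 := by
  have := one_add_sq_ne_zero_of_not_isSquare_neg_one h t
  intro ht
  simp only [circleParam] at ht
  field_simp at ht
  exact two_ne_zero_of_not_isSquare_neg_one h (by linear_combination ht)

lemma eq_or_eq_neg_of_circleParam_eq (h : ¬IsSquare (-1 : F)) {s t : F}
    (hst : circleParam s = circleParam t) : s = t ∨ s = -t := by
  have := one_add_sq_ne_zero_of_not_isSquare_neg_one h s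
  have := one_add_sq_ne_zero_of_not_isSquare_neg_one h t
  simp only [circleParam] at hst
  field_simp at hst
  have h0 : 2 * ((s - t) * (s + t)) = 0 := by linear_combination -hst
  rcases (mul_eq_zero.mp h0).resolve_left (two_ne_zero_of_not_isSquare_neg_one h) |>
    mul_eq_zero.mp with hs | hs
  · exact .inl (sub_eq_zero.mp hs)
  · exact .inr (eq_neg_of_add_eq_zero_left hs)

variable (F) [Fintype F] [DecidableEq F]

def circleAbscissas : Finset F := {x | ∃ y : F, x ^ 2 + y ^ 2 = 1}

variable {F}

@[simp]
lemma mem_circleAbscissas {x : F} : x ∈ circleAbscissas F ↔ ∃ y : F, x ^ 2 + y ^ 2 = 1 := by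
  simp [circleAbscissas]

lemma card_le_two_mul_card_image_circleParam (h : ¬IsSquare (-1 : F)) :
    Fintype.card F ≤ 2 * #(univ.image (circleParam : F → F)) := by
  refine card_le_mul_card_image univ 2 fun b hb ↦ ?_
  obtain ⟨t, -, rfl⟩ := mem_image.mp hb
  refine (card_le_card (t := {t, -t}) fun s hs ↦ ?_).trans card_le_two
  rcases eq_or_eq_neg_of_circleParam_eq h (mem_filter.mp hs).2 with rfl | rfl <;> simp

lemma card_add_three_le_two_mul_card_circleAbscissas (h : ¬IsSquare (-1 : F)) :
    Fintype.card F + 3 ≤ 2 * #(circleAbscissas F) := by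
  have hsub : insert (-1) (univ.image circleParam) ⊆ circleAbscissas F := by
    refine insert_subset (mem_circleAbscissas.mpr ⟨0, by ring⟩) fun x hx ↦ ?_
    obtain ⟨t, -, rfl⟩ := mem_image.mp hx
    exact mem_circleAbscissas.mpr ⟨_, circleParam_sq_add_sq h t⟩
  have hcard := card_le_card hsub
  rw [card_insert_of_notMem fun hx ↦ by
    obtain ⟨t, -, ht⟩ := mem_image.mp hx
    exact circleParam_ne_neg_one h t ht] at hcard
  have hodd : Fintype.card F % 2 = 1 := by
    have := FiniteField.isSquare_neg_one_iff.not.mp h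
    omega
  have := card_le_two_mul_card_image_circleParam h
  omega

end Circle

/-- Let `F` be a finite field with `card F ≡ 7 (mod 8)`. Then for every nonzero
`α ∈ F` the system `x1+x2+x3 = α`, `y1+y2+y3 = 0`, `xi² + yi² = 1` is solvable. -/
theorem system_even_solvable (F : Type*) [Field F] [Fintype F]
    (h7 : Fintype.card F % 8 = 7) :
    ∀ α : F, α ≠ 0 →
      ∃ x1 x2 x3 y1 y2 y3 : F,
        x1 + x2 + x3 = α ∧ y1 + y2 + y3 = 0 ∧
        x1 ^ 2 + y1 ^ 2 = 1 ∧ x2 ^ 2 + y2 ^ 2 = 1 ∧ x3 ^ 2 + y3 ^ 2 = 1 := by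
  classical
  intro α hα
  have hi : ¬IsSquare (-1 : F) := by
    rw [FiniteField.isSquare_neg_one_iff]
    omega
  have h2 := two_ne_zero_of_not_isSquare_neg_one hi
  have hinj : Function.Injective fun a : F ↦ (α ^ 2 - 1) / 2 - α * a :=
    sub_right_injective.comp (mul_right_injective₀ hα)
  have hX := card_add_three_le_two_mul_card_circleAbscissas hi
  obtain ⟨c, hc, hc1⟩ := exists_mem_inter_ne (s := (circleAbscissas F).image _)
    (t := circleAbscissas F) (by rw [card_image_of_injective _ hinj]; omega) (-1)
  obtain ⟨⟨a, ha, rfl⟩, hcX⟩ := And.imp mem_image.mp id (mem_inter.mp hc)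
  obtain ⟨b, hab⟩ := mem_circleAbscissas.mp ha
  obtain ⟨d, hcd⟩ := mem_circleAbscissas.mp hcX
  obtain ⟨x1, y1, x2, y2, hx, hy, hu, hv⟩ := exists_circle_add_circle_eq h2 hcd
    (fun h ↦ hc1 (eq_neg_of_add_eq_zero_right h)) (w₁ := α - a) (w₂ := -b)
    (by linear_combination hab - mul_div_cancel₀ (α ^ 2 - 1) h2)
  exact ⟨x1, x2, a, y1, y2, b, by linear_combination hx, by linear_combination hy, hu, hv, hab⟩
end

section
/- Assume the standard setup with q0 ≡ 7 (mod 8). Then every μ ∈ F can be written as μ = c1·h1 + c2·h2 + c3·h3 with c1, c2, c3 ∈ K and h1, h2, h3 ∈ H (equality in F, with the hi viewed as elements of F). Equivalently, the covering radius of the generalized Zetterberg code C_s(q0) is at most 3. -/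
/-!
Let `σ x = x ^ q`, let `k = 𝔽_q` be its fixed field and `N x = x σ(x)` the norm to `k`, so that `H`
is the kernel of `N` on `Fˣ`; the representations below use the coefficients `0, 1, 1/2` only.
Suppose `μ` is not a sum of three elements `c h`. For every `t ∈ k` such that `t² - 4 N μ` is not a
nonzero square of `k`, it has a square root `τ` with `σ τ = -τ`, and the quadratic equation with
this discriminant gives `x ∈ H` with `N (μ - x) = N μ + 1 - t =: u`. As `μ - x` is neither `0`, nor
in `H`, nor `(w₁ + w₂) / 2` with `wᵢ ∈ H`, the same argument shows that `u (u - 1)` is a nonzero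
square of `k`. But at most `(q - 1) / 2` values of `t` make `t² - 4 N μ` a nonzero square and at
most `(q - 3) / 2` values of `u` make `u (u - 1)` one, too few to account for all `q` values of `t`.
-/

open Finset

theorem Subgroup.mem_iff_pow_card_eq_one {G : Type*} [CommGroup G] [IsCyclic G] [Finite G]
    {H : Subgroup G} {x : G} : x ∈ H ↔ x ^ Nat.card H = 1 := by
  have hle : H ≤ (powMonoidHom (Nat.card H) : G →* G).ker := fun y hy =>
    congrArg Subtype.val (pow_card_eq_one' (G := H) (x := ⟨y, hy⟩))
  have heq := Subgroup.eq_of_le_of_card_ge hle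
    (by rw [IsCyclic.card_powMonoidHom_ker, Nat.gcd_eq_right H.card_subgroup_dvd_card])
  rw [SetLike.ext_iff.mp heq x, MonoidHom.mem_ker, powMonoidHom_apply]

section FiniteField

variable {F : Type*} [Field F] [Fintype F] {q : ℕ}

theorem exists_ringHom_eq_pow {n : ℕ} (hF : Fintype.card F = q ^ n) (hn : n ≠ 0) :
    ∃ σ : F →+* F, ∀ x, σ x = x ^ q := by
  obtain ⟨m, hp, hcard⟩ := FiniteField.card F (ringChar F)
  have : Fact (ringChar F).Prime := ⟨hp⟩
  obtain ⟨i, -, hi⟩ := (Nat.dvd_prime_pow hp).mp (hcard ▸ hF ▸ dvd_pow_self q hn)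
  exact ⟨iterateFrobenius F (ringChar F) i, fun x => by rw [iterateFrobenius_def, hi]⟩

theorem ringChar_ne_two_of_odd_card (h : Odd (Fintype.card F)) : ringChar F ≠ 2 := fun h2 =>
  Nat.not_even_iff_odd.mpr h (Nat.even_iff.mpr (FiniteField.even_card_iff_char_two.mp h2))

theorem isSquare_of_pow_eq_self (hF : Fintype.card F = q ^ 2) (hq : Odd q) {d : F}
    (hd : d ^ q = d) : IsSquare d := by
  rcases eq_or_ne d 0 with rfl | hd0
  · exact IsSquare.zero
  obtain ⟨j, rfl⟩ := hq
  have hd1 : d ^ (2 * j) = 1 := mul_left_cancel₀ hd0 (by rw [← pow_succ', hd, mul_one])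
  rw [FiniteField.isSquare_iff (ringChar_ne_two_of_odd_card (hF ▸ (odd_two_mul_add_one j).pow))
    hd0, hF, show (2 * j + 1) ^ 2 / 2 = 2 * j * (j + 1) by
      ring_nf; omega, pow_mul, hd1, one_pow]

end FiniteField

section Counting

variable {k : Type*} [Field k] [Fintype k] [DecidableEq k]

theorem two_mul_card_isSquare_sq_sub_le (h2 : (2 : k) ≠ 0) {a : k} (ha : a ≠ 0) :
    2 * #{t | IsSquare (t ^ 2 - a) ∧ t ^ 2 - a ≠ 0} ≤ #{r | r ≠ 0 ∧ r ^ 2 ≠ a} := by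
  refine mul_card_image_le_card_of_maps_to (f := fun r => (r + a / r) / 2) ?_ 2 ?_
  · intro r hr
    simp only [mem_filter, mem_univ, true_and] at hr ⊢
    obtain ⟨hr0, hra⟩ := hr
    have hsq : ((r + a / r) / 2) ^ 2 - a = ((r - a / r) / 2) * ((r - a / r) / 2) := by
      field_simp
      ring
    refine ⟨⟨_, hsq⟩, ?_⟩
    rw [hsq, Ne, mul_self_eq_zero, div_eq_zero_iff, sub_eq_zero, eq_div_iff hr0]
    rintro (h | h)
    · exact hra (by rw [← h, sq])
    · exact h2 h
  · intro t ht
    simp only [mem_filter, mem_univ, true_and] at ht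
    obtain ⟨⟨y, hy⟩, hne⟩ := ht
    have hy0 : y ≠ 0 := by rintro rfl; simp [hy] at hne
    have hroot : ∀ s, s ≠ 0 → (t + s) * (t - s) = a →
        (t + s ≠ 0 ∧ (t + s) ^ 2 ≠ a) ∧ (t + s + a / (t + s)) / 2 = t := by
      intro s hs hts
      have hts0 : t + s ≠ 0 := left_ne_zero_of_mul (hts ▸ ha)
      refine ⟨⟨hts0, fun h => ?_⟩, ?_⟩
      · rw [← hts, sq] at h
        exact hs (mul_left_cancel₀ h2 (by linear_combination mul_left_cancel₀ hts0 h))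
      · rw [← hts, mul_div_cancel_left₀ _ hts0]
        field_simp
        ring
    calc 2 = #({t + y, t - y} : Finset k) := by
          rw [card_pair]
          intro h
          exact hy0 (mul_left_cancel₀ h2 (by linear_combination h))
      _ ≤ _ := card_le_card fun r hr => by
          simp only [mem_filter, mem_univ, true_and]
          rcases mem_insert.mp hr with rfl | hr
          · exact hroot y hy0 (by linear_combination hy)
          · rw [mem_singleton.mp hr, sub_eq_add_neg]
            exact hroot (-y) (neg_ne_zero.mpr hy0) (by linear_combination hy)

theorem card_ne_zero_sq_ne_le (a : k) : #{r : k | r ≠ 0 ∧ r ^ 2 ≠ a} ≤ Fintype.card k - 1 := by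
  rw [← card_univ, ← card_erase_of_mem (mem_univ (0 : k))]
  exact card_le_card fun r hr => by simp_all

theorem card_ne_zero_sq_ne_one (h2 : (2 : k) ≠ 0) :
    #{r : k | r ≠ 0 ∧ r ^ 2 ≠ 1} = Fintype.card k - 3 := by
  have h : ({r : k | r ≠ 0 ∧ r ^ 2 ≠ 1} : Finset k) = univ \ {0, 1, -1} := by
    ext r
    simp [not_or]
  have h10 : (1 : k) ≠ 0 := one_ne_zero
  have h0 : (0 : k) ∉ ({1, -1} : Finset k) := by
    simp only [mem_insert, mem_singleton, not_or]
    exact ⟨h10.symm, (neg_ne_zero.mpr h10).symm⟩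
  have h1 : (1 : k) ≠ -1 := fun h => h2 (by linear_combination h)
  rw [h, card_sdiff_of_subset (subset_univ _), card_univ, card_insert_of_notMem h0, card_pair h1]

end Counting

@[simp, norm_cast]
theorem Subfield.coe_ofNat {F : Type*} [Field F] (K : Subfield F) (n : ℕ) [n.AtLeastTwo] :
    ((ofNat(n) : K) : F) = ofNat(n) :=
  rfl

section Involution

variable {F : Type*} [Field F] (σ : F →+* F)

def normOneSubgroup : Subgroup Fˣ := (MonoidHom.id Fˣ * Units.map (σ : F →* F)).ker

theorem mem_normOneSubgroup {x : Fˣ} : x ∈ normOneSubgroup σ ↔ (x : F) * σ x = 1 := by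
  simp [normOneSubgroup, Units.ext_iff]

abbrev fixedSubfield : Subfield F := σ.eqLocusField (RingHom.id F)

variable {σ}

theorem map_coe_fixedSubfield (x : fixedSubfield σ) : σ x = x := x.2

theorem exists_mul_map_eq_of_sq_eq (hσ : ∀ x, σ (σ x) = x) (h2 : (2 : F) ≠ 0) {μ B e τ : F}
    (hμ : μ ≠ 0) (hB : σ B = B) (hτ : σ τ = -τ) (hτB : τ ^ 2 = B ^ 2 - 4 * (μ * σ μ) * e) :
    ∃ x, x * σ x = e ∧ (μ - x) * σ (μ - x) = μ * σ μ + e - B := by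
  have hσμ : σ μ ≠ 0 := (map_ne_zero σ).mpr hμ
  have hx : σ ((B + τ) / (2 * σ μ)) = (B - τ) / (2 * μ) := by
    rw [map_div₀, map_add, hB, hτ, map_mul, map_ofNat, hσ, sub_eq_add_neg]
  -- `x` is a root of `σ μ X ^ 2 - B X + e μ`, whose discriminant is `τ ^ 2`
  refine ⟨(B + τ) / (2 * σ μ), ?_, ?_⟩
  · rw [hx]
    field_simp
    linear_combination -hτB
  · rw [map_sub, hx]
    field_simp
    linear_combination -hτB

theorem exists_eq_half_add_half (hσ : ∀ x, σ (σ x) = x) (h2 : (2 : F) ≠ 0) {ν τ : F}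
    (hν : ν ≠ 0) (hτ : σ τ = -τ) (hτν : τ ^ 2 = ν * σ ν * (ν * σ ν - 1)) :
    ∃ w₁ w₂, w₁ * σ w₁ = 1 ∧ w₂ * σ w₂ = 1 ∧ ν = 2⁻¹ * w₁ + 2⁻¹ * w₂ := by
  have hN : σ (ν * σ ν) = ν * σ ν := by rw [map_mul, hσ, mul_comm]
  obtain ⟨x, hx, hνx⟩ := exists_mul_map_eq_of_sq_eq hσ h2 (e := 2⁻¹ ^ 2) hν hN hτ (by
    rw [hτν]
    field_simp
    ring)
  refine ⟨2 * x, 2 * (ν - x), ?_, ?_, by field_simp; ring⟩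
  · rw [map_mul, map_ofNat, mul_mul_mul_comm, hx]
    field_simp
  · rw [map_mul, map_ofNat, mul_mul_mul_comm, hνx]
    field_simp
    ring

theorem isSquare_or_exists_sq_eq (hsq : ∀ d, σ d = d → IsSquare d) (d : fixedSubfield σ) :
    IsSquare d ∨ ∃ τ, σ τ = -τ ∧ τ ^ 2 = d := by
  obtain ⟨y, hy⟩ := hsq d (map_coe_fixedSubfield d)
  have h : (σ y - y) * (σ y + y) = 0 := by
    have hσy : σ y * σ y = y * y := by rw [← map_mul, ← hy, map_coe_fixedSubfield]
    linear_combination hσy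
  rcases mul_eq_zero.mp h with h | h
  · exact Or.inl ⟨⟨y, sub_eq_zero.mp h⟩, Subtype.ext hy⟩
  · exact Or.inr ⟨y, eq_neg_of_add_eq_zero_left h, by rw [hy, sq]⟩

end Involution

section SumOfThree

variable {F : Type*} [Field F]

def IsSumOfThree (K : Subfield F) (H : Subgroup Fˣ) (μ : F) : Prop :=
  ∃ c1 c2 c3 : F, c1 ∈ K ∧ c2 ∈ K ∧ c3 ∈ K ∧
    ∃ h1 h2 h3 : Fˣ, h1 ∈ H ∧ h2 ∈ H ∧ h3 ∈ H ∧
      μ = c1 * (h1 : F) + c2 * (h2 : F) + c3 * (h3 : F)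

variable {σ : F →+* F} {K : Subfield F}

theorem isSumOfThree_normOneSubgroup_of_eq {μ c₁ c₂ c₃ x₁ x₂ x₃ : F} (hc₁ : c₁ ∈ K) (hc₂ : c₂ ∈ K)
    (hc₃ : c₃ ∈ K) (hx₁ : x₁ * σ x₁ = 1) (hx₂ : x₂ * σ x₂ = 1) (hx₃ : x₃ * σ x₃ = 1)
    (hμ : μ = c₁ * x₁ + c₂ * x₂ + c₃ * x₃) : IsSumOfThree K (normOneSubgroup σ) μ :=
  ⟨c₁, c₂, c₃, hc₁, hc₂, hc₃,
    Units.mk0 x₁ (left_ne_zero_of_mul_eq_one hx₁), Units.mk0 x₂ (left_ne_zero_of_mul_eq_one hx₂),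
    Units.mk0 x₃ (left_ne_zero_of_mul_eq_one hx₃),
    (mem_normOneSubgroup σ).mpr hx₁, (mem_normOneSubgroup σ).mpr hx₂,
    (mem_normOneSubgroup σ).mpr hx₃, hμ⟩

theorem isSumOfThree_normOneSubgroup_zero : IsSumOfThree K (normOneSubgroup σ) 0 :=
  isSumOfThree_normOneSubgroup_of_eq K.zero_mem K.zero_mem K.zero_mem (x₁ := 1) (x₂ := 1) (x₃ := 1)
    (by simp) (by simp) (by simp) (by simp)

theorem not_exists_sq_eq_of_not_isSumOfThree (hσ : ∀ x, σ (σ x) = x) (h2 : (2 : F) ≠ 0) {μ t : F}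
    (hμ : ¬ IsSumOfThree K (normOneSubgroup σ) μ) (ht : σ t = t)
    (hτ : ∃ τ, σ τ = -τ ∧ τ ^ 2 = t ^ 2 - 4 * (μ * σ μ)) :
    (μ * σ μ + 1 - t) * (μ * σ μ - t) ≠ 0 ∧
      ¬ ∃ τ, σ τ = -τ ∧ τ ^ 2 = (μ * σ μ + 1 - t) * (μ * σ μ - t) := by
  have hμ0 : μ ≠ 0 := by rintro rfl; exact hμ isSumOfThree_normOneSubgroup_zero
  obtain ⟨τ, hτ, hτt⟩ := hτ
  obtain ⟨x, hx, hν⟩ := exists_mul_map_eq_of_sq_eq hσ h2 (e := 1) hμ0 ht hτ (by rw [hτt]; ring)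
  have hν0 : μ - x ≠ 0 := by
    intro h
    exact hμ (isSumOfThree_normOneSubgroup_of_eq K.one_mem K.zero_mem K.zero_mem hx
      (x₂ := 1) (x₃ := 1) (by simp) (by simp) (by linear_combination h))
  refine ⟨mul_ne_zero (fun h => ?_) (fun h => ?_), ?_⟩
  · exact mul_ne_zero hν0 ((map_ne_zero σ).mpr hν0) (hν.trans h)
  · exact hμ (isSumOfThree_normOneSubgroup_of_eq K.one_mem K.one_mem K.zero_mem hx
      (x₂ := μ - x) (x₃ := 1) (by linear_combination hν + h) (by simp) (by ring))
  · rintro ⟨τ', hτ', hτ't⟩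
    obtain ⟨w₁, w₂, hw₁, hw₂, hνw⟩ := exists_eq_half_add_half hσ h2 hν0 hτ' (by
      rw [hτ't, hν]; ring)
    have h2K : (2 : F)⁻¹ ∈ K := K.inv_mem (ofNat_mem K 2)
    exact hμ (isSumOfThree_normOneSubgroup_of_eq K.one_mem h2K h2K hx hw₁ hw₂
      (by linear_combination hνw))

/-- With `u = n + 1 - t` this says that `4 u (u - 1) = (2 u - 1) ^ 2 - 1` is a nonzero square. -/
theorem isSquare_sq_sub_one_of_not_isSumOfThree (hσ : ∀ x, σ (σ x) = x) (h2 : (2 : F) ≠ 0)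
    (hsq : ∀ d, σ d = d → IsSquare d) {μ : F} (hμ : ¬ IsSumOfThree K (normOneSubgroup σ) μ)
    {n : fixedSubfield σ} (hn : (n : F) = μ * σ μ) {t : fixedSubfield σ}
    (ht : ¬ (IsSquare (t ^ 2 - 4 * n) ∧ t ^ 2 - 4 * n ≠ 0)) :
    IsSquare ((2 * n + 1 - 2 * t) ^ 2 - 1) ∧ (2 * n + 1 - 2 * t) ^ 2 - 1 ≠ 0 := by
  have hτ : ∃ τ, σ τ = -τ ∧ τ ^ 2 = t ^ 2 - 4 * (μ * σ μ) := by
    by_cases hd : t ^ 2 - 4 * n = 0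
    · refine ⟨0, by simp, ?_⟩
      rw [← hn, zero_pow two_ne_zero]
      exact_mod_cast hd.symm
    · rcases isSquare_or_exists_sq_eq hsq (t ^ 2 - 4 * n) with hsq' | ⟨τ, hτ, hτd⟩
      · exact absurd ⟨hsq', hd⟩ ht
      · refine ⟨τ, hτ, ?_⟩
        rw [← hn]
        exact_mod_cast hτd
  obtain ⟨hne, hnot⟩ :=
    not_exists_sq_eq_of_not_isSumOfThree hσ h2 hμ (map_coe_fixedSubfield t) hτ
  rw [← hn] at hne hnot
  rcases isSquare_or_exists_sq_eq hsq ((n + 1 - t) * (n - t)) with ⟨r, hr⟩ | ⟨τ, hτ, hτd⟩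
  · refine ⟨⟨2 * r, by linear_combination 4 * hr⟩, fun h => hne ?_⟩
    have h4 : (4 : F) ≠ 0 := by
      rw [show (4 : F) = 2 * 2 by norm_num]
      exact mul_ne_zero h2 h2
    have hF : ((2 * n + 1 - 2 * t) ^ 2 - 1 : F) = 0 := by exact_mod_cast h
    exact (mul_eq_zero.mp (by linear_combination hF)).resolve_left h4
  · push_cast at hτd
    exact absurd ⟨τ, hτ, hτd⟩ hnot

theorem isSumOfThree_normOneSubgroup_of_isSquare [Finite F] (hσ : ∀ x, σ (σ x) = x)
    (h2 : (2 : F) ≠ 0) (hsq : ∀ d, σ d = d → IsSquare d) (μ : F) :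
    IsSumOfThree K (normOneSubgroup σ) μ := by
  classical
  have := Fintype.ofFinite F
  by_contra hμ
  have hμ0 : μ ≠ 0 := by rintro rfl; exact hμ isSumOfThree_normOneSubgroup_zero
  let n : fixedSubfield σ := ⟨μ * σ μ, by simp [hσ, mul_comm]⟩
  have h2k : (2 : fixedSubfield σ) ≠ 0 := fun h => h2 (by simpa using congrArg Subtype.val h)
  have hn0 : n ≠ 0 := fun h =>
    mul_ne_zero hμ0 ((map_ne_zero σ).mpr hμ0) (congrArg Subtype.val h)
  have h4n : 4 * n ≠ 0 := by
    rw [show (4 : fixedSubfield σ) = 2 * 2 by norm_num]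
    exact mul_ne_zero (mul_ne_zero h2k h2k) hn0
  have hT : #{t : fixedSubfield σ | ¬ (IsSquare (t ^ 2 - 4 * n) ∧ t ^ 2 - 4 * n ≠ 0)} ≤
      #{w : fixedSubfield σ | IsSquare (w ^ 2 - 1) ∧ w ^ 2 - 1 ≠ 0} := by
    refine card_le_card_of_injOn (fun t => 2 * n + 1 - 2 * t) (fun t ht => ?_) ?_
    · simp only [coe_filter, mem_univ, true_and, Set.mem_ofPred_eq] at ht ⊢
      exact isSquare_sq_sub_one_of_not_isSumOfThree hσ h2 hsq hμ rfl ht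
    · intro t₁ _ t₂ _ h
      exact mul_left_cancel₀ h2k (by linear_combination -h)
  have hsplit := card_filter_add_card_filter_not (s := univ)
    (fun t : fixedSubfield σ => IsSquare (t ^ 2 - 4 * n) ∧ t ^ 2 - 4 * n ≠ 0)
  have hP := two_mul_card_isSquare_sq_sub_le h2k h4n
  have hP₁ := two_mul_card_isSquare_sq_sub_le h2k one_ne_zero
  have hR := card_ne_zero_sq_ne_le (4 * n)
  have hR₁ := card_ne_zero_sq_ne_one h2k
  have hpos := Fintype.card_pos (α := fixedSubfield σ)
  rw [card_univ] at hsplit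
  omega

end SumOfThree

theorem covering_radius_le_three_general (q0 s q : ℕ)
    (hq0odd : Odd q0) (hq : q = q0 ^ s)
    (F : Type*) [Field F] [Fintype F] (hF : Fintype.card F = q ^ 2)
    (K : Subfield F)
    (H : Subgroup Fˣ) (hH : Nat.card H = q + 1) :
    ∀ μ : F, ∃ c1 c2 c3 : F, c1 ∈ K ∧ c2 ∈ K ∧ c3 ∈ K ∧
      ∃ h1 h2 h3 : Fˣ, h1 ∈ H ∧ h2 ∈ H ∧ h3 ∈ H ∧
        μ = c1 * (h1 : F) + c2 * (h2 : F) + c3 * (h3 : F) := by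
  have hqodd : Odd q := hq ▸ hq0odd.pow
  obtain ⟨σ, hσ⟩ := exists_ringHom_eq_pow hF two_ne_zero
  have hinv : ∀ x, σ (σ x) = x := fun x => by
    rw [hσ, hσ, ← pow_mul, ← sq, ← hF, FiniteField.pow_card]
  have h2 : (2 : F) ≠ 0 := Ring.two_ne_zero (ringChar_ne_two_of_odd_card (hF ▸ hqodd.pow))
  have hsq : ∀ d, σ d = d → IsSquare d := fun d hd =>
    isSquare_of_pow_eq_self hF hqodd (hσ d ▸ hd)
  have hHσ : H = normOneSubgroup σ := by
    ext x
    rw [Subgroup.mem_iff_pow_card_eq_one, mem_normOneSubgroup, hH, hσ, ← pow_succ', Units.ext_iff,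
      Units.val_pow_eq_pow_val, Units.val_one]
  intro μ
  exact hHσ ▸ isSumOfThree_normOneSubgroup_of_isSquare hinv h2 hsq μ

/-- Standard setup with `q0 ≡ 7 (mod 8)`: every `μ ∈ F` can be written as
`c1·h1 + c2·h2 + c3·h3` with `ci ∈ K` and `hi ∈ H`, i.e. the covering radius of
the generalized Zetterberg code `C_s(q0)` is at most `3`. -/
theorem covering_radius_le_three (q0 s q : ℕ) (hq0 : IsPrimePow q0)
    (hq0odd : Odd q0) (hq07 : q0 % 8 = 7) (hs : Odd s) (hq : q = q0 ^ s)
    (F : Type*) [Field F] [Fintype F] (hF : Fintype.card F = q ^ 2)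
    (K : Subfield F) (hK : Nat.card K = q0)
    (H : Subgroup Fˣ) (hH : Nat.card H = q + 1) :
    ∀ μ : F, ∃ c1 c2 c3 : F, c1 ∈ K ∧ c2 ∈ K ∧ c3 ∈ K ∧
      ∃ h1 h2 h3 : Fˣ, h1 ∈ H ∧ h2 ∈ H ∧ h3 ∈ H ∧
        μ = c1 * (h1 : F) + c2 * (h2 : F) + c3 * (h3 : F) :=
  covering_radius_le_three_general q0 s q hq0odd hq F hF K H hH
end

section
/- Assume the standard setup, and let ℓ ≥ 3 be an integer with q ≡ 2^ℓ − 1 (mod 2^{ℓ+1}). Let m = (q0−1)/2 and let H_m be the unique subgroup of Fˣ of order m(q+1). Then the following are equivalent: (a) there exists μ ∈ F such that μ ≠ c1·h1 + c2·h2 for all c1, c2 ∈ K and all h1, h2 ∈ H (i.e., the covering radius of C_s(q0) equals 3 rather than 2); (b) there exists γ ∈ Fˣ with (γ^{q−1})^{2^ℓ} = 1 such that γ (as an element of F) cannot be written as h1 + h2 with h1, h2 ∈ H_m. -/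
/-!
Since `q₀ - 1 ∣ q - 1` and `gcd (q - 1) (q + 1) = 2`, the subgroup `Kˣ ⊔ H` of the cyclic group
`Fˣ` has order `lcm (q₀ - 1) (q + 1) = m (q + 1)`, so it is `H_m`. Hence the elements
`c₁h₁ + c₂h₂` with both `cᵢ ≠ 0` are exactly the sums of two elements of `H_m`, and a nonzero
element `c h` is one as well, being `(c/2) h + (c/2) h`.

Writing `q + 1 = 2^ℓ w` with `w` odd, `q² - 1 = (q - 1) 2^ℓ · w` is a coprime factorisation, so
every `μ ∈ Fˣ` is `γ h` with `γ^((q - 1) 2^ℓ) = 1` and `h ∈ H`. As `H_m` is a group containing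
`h`, `μ` is a sum of two elements of `H_m` iff `γ` is.
-/

theorem Nat.gcd_sub_one_add_one_dvd_two (n : ℕ) : Nat.gcd (n - 1) (n + 1) ∣ 2 := by
  rcases n with _ | n
  · simp
  · rw [Nat.add_sub_cancel, show n + 1 + 1 = 2 + n by omega, Nat.gcd_add_self_right]
    exact Nat.gcd_dvd_right n 2

theorem Nat.mul_dvd_mul_lcm_of_gcd_dvd {a b k : ℕ} (h : Nat.gcd a b ∣ k) :
    a * b ∣ k * Nat.lcm a b :=
  Nat.gcd_mul_lcm a b ▸ Nat.mul_dvd_mul_right h _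

theorem Nat.exists_odd_add_one_eq_of_modEq {q ℓ : ℕ} (h : q ≡ 2 ^ ℓ - 1 [MOD 2 ^ (ℓ + 1)]) :
    ∃ w, Odd w ∧ q + 1 = 2 ^ ℓ * w := by
  have hq := Nat.div_add_mod q (2 ^ (ℓ + 1))
  rw [h, pow_succ] at hq
  obtain ⟨P, hP⟩ : ∃ P, 2 ^ ℓ = P + 1 := ⟨2 ^ ℓ - 1, by have := Nat.one_le_two_pow (n := ℓ); omega⟩
  rw [hP, Nat.add_sub_cancel, Nat.mod_eq_of_lt (by omega)] at hq
  generalize q / ((P + 1) * 2) = t at hq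
  exact ⟨2 * t + 1, odd_two_mul_add_one t, by rw [hP, ← hq]; ring⟩

theorem Nat.coprime_sub_one_of_dvd_add_one {n w : ℕ} (hw : Odd w) (h : w ∣ n + 1) :
    Nat.Coprime (n - 1) w :=
  Nat.eq_one_of_dvd_coprimes (Nat.coprime_two_left.mpr hw)
    ((Nat.gcd_dvd_gcd_of_dvd_right _ h).trans (Nat.gcd_sub_one_add_one_dvd_two n))
    (Nat.gcd_dvd_right _ _)

theorem Nat.exists_coprime_mul_eq_sq_sub_one {q ℓ : ℕ} (h : q ≡ 2 ^ ℓ - 1 [MOD 2 ^ (ℓ + 1)]) :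
    ∃ w, w ∣ q + 1 ∧ ((q - 1) * 2 ^ ℓ).Coprime w ∧ (q - 1) * 2 ^ ℓ * w = q ^ 2 - 1 := by
  obtain ⟨w, hw, hqw⟩ := Nat.exists_odd_add_one_eq_of_modEq h
  refine ⟨w, hqw ▸ dvd_mul_left w _, ?_, ?_⟩
  · exact Nat.Coprime.mul_left (Nat.coprime_sub_one_of_dvd_add_one hw (hqw ▸ dvd_mul_left w _))
      ((Nat.coprime_two_left.mpr hw).pow_left ℓ)
  · rw [mul_assoc, ← hqw, mul_comm, ← Nat.sq_sub_sq, one_pow]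

theorem exists_mul_eq_of_pow_mul_eq_one {G : Type*} [CommGroup G] {a b : ℕ} (hab : a.Coprime b)
    {x : G} (hx : x ^ (a * b) = 1) : ∃ y z : G, y ^ a = 1 ∧ z ^ b = 1 ∧ y * z = x := by
  obtain ⟨u, v, huv⟩ := Nat.isCoprime_iff_coprime.mpr hab
  have hx' : x ^ ((a : ℤ) * b) = 1 := by exact_mod_cast hx
  refine ⟨x ^ (v * b), x ^ (u * a), ?_, ?_, ?_⟩
  · rw [← zpow_natCast, ← zpow_mul, show v * b * a = a * b * v by ring, zpow_mul, hx', one_zpow]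
  · rw [← zpow_natCast, ← zpow_mul, show u * a * b = a * b * u by ring, zpow_mul, hx', one_zpow]
  · rw [← zpow_add, add_comm, huv, zpow_one]

namespace IsCyclic
variable {G : Type*} [CommGroup G] [IsCyclic G] [Finite G]

theorem mem_subgroup_iff_pow_card_eq_one (S : Subgroup G) {x : G} :
    x ∈ S ↔ x ^ Nat.card S = 1 := by
  have hle : S ≤ (powMonoidHom (Nat.card S) : G →* G).ker := fun y hy =>
    congrArg Subtype.val (pow_card_eq_one' (x := (⟨y, hy⟩ : S)))
  have hcard : Nat.card (powMonoidHom (Nat.card S) : G →* G).ker ≤ Nat.card S := by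
    rw [card_powMonoidHom_ker, Nat.gcd_eq_right S.card_subgroup_dvd_card]
  refine ⟨fun hx => hle hx, fun hx => ?_⟩
  rw [Subgroup.eq_of_le_of_card_ge hle hcard]
  exact hx

theorem subgroup_le_of_card_dvd {S T : Subgroup G} (h : Nat.card S ∣ Nat.card T) : S ≤ T :=
  fun x hx => by
    rw [mem_subgroup_iff_pow_card_eq_one] at hx ⊢
    obtain ⟨k, hk⟩ := h
    rw [hk, pow_mul, hx, one_pow]

theorem exists_pow_eq_one_mul_mem {a w : ℕ} (hcop : a.Coprime w) (hG : Nat.card G = a * w)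
    {S : Subgroup G} (hS : w ∣ Nat.card S) (x : G) : ∃ y s, y ^ a = 1 ∧ s ∈ S ∧ y * s = x := by
  obtain ⟨y, s, hy, hs, hys⟩ :=
    exists_mul_eq_of_pow_mul_eq_one hcop (hG ▸ pow_card_eq_one' (x := x))
  refine ⟨y, s, hy, ?_, hys⟩
  obtain ⟨k, hk⟩ := hS
  rw [mem_subgroup_iff_pow_card_eq_one, hk, pow_mul, hs, one_pow]

end IsCyclic

theorem Subgroup.sup_eq_of_card_dvd_lcm {G : Type*} [Group G] {A B C : Subgroup G} [Finite C]
    (hA : A ≤ C) (hB : B ≤ C) (h : Nat.card C ∣ Nat.lcm (Nat.card A) (Nat.card B)) :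
    A ⊔ B = C := by
  have hAB := sup_le hA hB
  have : Finite ↥(A ⊔ B) := Finite.of_injective _ (inclusion_injective hAB)
  have hlcm : Nat.lcm (Nat.card A) (Nat.card B) ∣ Nat.card ↥(A ⊔ B) :=
    Nat.lcm_dvd (card_dvd_of_le le_sup_left) (card_dvd_of_le le_sup_right)
  exact eq_of_le_of_card_ge hAB (Nat.le_of_dvd Nat.card_pos (h.trans hlcm))

namespace Subfield
variable {F : Type*} [Field F] (K : Subfield F)

theorem mem_units_toSubmonoid_iff {u : Fˣ} : u ∈ K.toSubmonoid.units ↔ (u : F) ∈ K := by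
  rw [Submonoid.mem_units_iff, Units.val_inv_eq_inv_val]
  exact ⟨And.left, fun h => ⟨h, K.inv_mem h⟩⟩

theorem card_units_toSubmonoid [Finite F] : Nat.card K.toSubmonoid.units = Nat.card K - 1 := by
  rw [Nat.card_congr K.toSubmonoid.unitsEquivUnitsType.toEquiv]
  exact Nat.card_units K

end Subfield

section SumsOfTwo
variable {F : Type*} [Field F]

def IsSumOfTwo (L : Subgroup Fˣ) (x : F) : Prop :=
  ∃ g₁ ∈ L, ∃ g₂ ∈ L, x = g₁ + g₂

theorem IsSumOfTwo.mul_right {L : Subgroup Fˣ} {x : F} (hx : IsSumOfTwo L x) {g : Fˣ}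
    (hg : g ∈ L) : IsSumOfTwo L (x * g) := by
  obtain ⟨g₁, hg₁, g₂, hg₂, rfl⟩ := hx
  exact ⟨g₁ * g, L.mul_mem hg₁ hg, g₂ * g, L.mul_mem hg₂ hg, by push_cast; ring⟩

variable {K : Subfield F} {H : Subgroup Fˣ}

theorem mk0_mul_mem_units_sup {c : F} (hc : c ∈ K) (hc0 : c ≠ 0) {h : Fˣ} (hh : h ∈ H) :
    Units.mk0 c hc0 * h ∈ K.toSubmonoid.units ⊔ H :=
  Subgroup.mul_mem_sup ((K.mem_units_toSubmonoid_iff).mpr hc) hh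

theorem IsSumOfTwo.exists_eq_add {x : F} (hx : IsSumOfTwo (K.toSubmonoid.units ⊔ H) x) :
    ∃ c₁ c₂ : F, c₁ ∈ K ∧ c₂ ∈ K ∧
      ∃ h₁ h₂ : Fˣ, h₁ ∈ H ∧ h₂ ∈ H ∧ x = c₁ * h₁ + c₂ * h₂ := by
  obtain ⟨g₁, hg₁, g₂, hg₂, rfl⟩ := hx
  obtain ⟨c₁, hc₁, h₁, hh₁, rfl⟩ := Subgroup.mem_sup.mp hg₁
  obtain ⟨c₂, hc₂, h₂, hh₂, rfl⟩ := Subgroup.mem_sup.mp hg₂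
  exact ⟨c₁, c₂, (K.mem_units_toSubmonoid_iff).mp hc₁, (K.mem_units_toSubmonoid_iff).mp hc₂,
    h₁, h₂, hh₁, hh₂, by push_cast; rfl⟩

theorem isSumOfTwo_mul [NeZero (2 : F)] {c : F} (hc : c ∈ K) (hc0 : c ≠ 0) {h : Fˣ}
    (hh : h ∈ H) : IsSumOfTwo (K.toSubmonoid.units ⊔ H) (c * h) := by
  have hmem :=
    mk0_mul_mem_units_sup (K.div_mem hc (ofNat_mem K 2)) (div_ne_zero hc0 two_ne_zero) hh
  exact ⟨_, hmem, _, hmem, by rw [Units.val_mul, Units.val_mk0, ← add_mul, add_halves]⟩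

theorem isSumOfTwo_of_eq_add [NeZero (2 : F)] {x c₁ c₂ : F} (hx : x ≠ 0) (hc₁ : c₁ ∈ K)
    (hc₂ : c₂ ∈ K) {h₁ h₂ : Fˣ} (hh₁ : h₁ ∈ H) (hh₂ : h₂ ∈ H) (he : x = c₁ * h₁ + c₂ * h₂) :
    IsSumOfTwo (K.toSubmonoid.units ⊔ H) x := by
  rcases eq_or_ne c₁ 0 with rfl | hc₁0 <;> rcases eq_or_ne c₂ 0 with rfl | hc₂0
  · simp [he] at hx
  · simpa [he] using isSumOfTwo_mul hc₂ hc₂0 hh₂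
  · simpa [he] using isSumOfTwo_mul hc₁ hc₁0 hh₁
  · exact ⟨_, mk0_mul_mem_units_sup hc₁ hc₁0 hh₁, _, mk0_mul_mem_units_sup hc₂ hc₂0 hh₂,
      by simpa using he⟩

theorem units_sup_eq_of_card [Finite F] {L : Subgroup Fˣ} {q₀ q m : ℕ} (hK : Nat.card K = q₀)
    (hH : Nat.card H = q + 1) (hL : Nat.card L = m * (q + 1)) (hm : 2 * m = q₀ - 1)
    (hdvd : q₀ - 1 ∣ q - 1) (hq : Odd q) : K.toSubmonoid.units ⊔ H = L := by
  have hcardK : Nat.card K.toSubmonoid.units = 2 * m := by rw [K.card_units_toSubmonoid, hK, hm]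
  have hgcd : Nat.gcd (2 * m) (q + 1) ∣ 2 :=
    (Nat.gcd_dvd_gcd_of_dvd_left _ (hm ▸ hdvd)).trans (Nat.gcd_sub_one_add_one_dvd_two q)
  obtain ⟨k, hk⟩ := hq
  refine Subgroup.sup_eq_of_card_dvd_lcm (IsCyclic.subgroup_le_of_card_dvd ?_)
    (IsCyclic.subgroup_le_of_card_dvd ?_) ?_
  · rw [hcardK, hL, hk]
    exact ⟨k + 1, by ring⟩
  · rw [hH, hL]
    exact dvd_mul_left _ _
  · rw [hcardK, hH, hL]
    refine Nat.dvd_of_mul_dvd_mul_left two_pos ?_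
    rw [← mul_assoc]
    exact Nat.mul_dvd_mul_lcm_of_gcd_dvd hgcd

end SumsOfTwo

theorem covering_radius_eq_three_iff_general (q0 s q ℓ : ℕ)
    (hq0odd : Odd q0) (hq : q = q0 ^ s)
    (hqmod : q ≡ 2 ^ ℓ - 1 [MOD 2 ^ (ℓ + 1)])
    (F : Type*) [Field F] [Fintype F] (hF : Fintype.card F = q ^ 2)
    (K : Subfield F) (hK : Nat.card K = q0)
    (H : Subgroup Fˣ) (hH : Nat.card H = q + 1)
    (m : ℕ) (hm : m = (q0 - 1) / 2)
    (Hm : Subgroup Fˣ) (hHm : Nat.card Hm = m * (q + 1)) :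
    (∃ μ : F, ∀ c1 c2 : F, c1 ∈ K → c2 ∈ K →
        ∀ h1 h2 : Fˣ, h1 ∈ H → h2 ∈ H → μ ≠ c1 * (h1 : F) + c2 * (h2 : F)) ↔
      (∃ γ : Fˣ, (γ ^ (q - 1)) ^ 2 ^ ℓ = 1 ∧
        ∀ h1 h2 : Fˣ, h1 ∈ Hm → h2 ∈ Hm → (γ : F) ≠ (h1 : F) + (h2 : F)) := by
  have hq_odd : Odd q := hq ▸ hq0odd.pow
  have hKH : K.toSubmonoid.units ⊔ H = Hm := units_sup_eq_of_card hK hH hHm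
    (by obtain ⟨k, rfl⟩ := hq0odd; omega) (hq ▸ Nat.sub_one_dvd_pow_sub_one q0 s) hq_odd
  obtain ⟨w, hwq, hcop, hcard⟩ := Nat.exists_coprime_mul_eq_sq_sub_one hqmod
  have : NeZero (2 : F) := ⟨Ring.two_ne_zero fun h => by
    simpa [hF, Nat.odd_iff.mp hq_odd.pow] using FiniteField.even_card_iff_char_two.mp h⟩
  constructor
  · rintro ⟨μ, hμ⟩
    have hμ0 : μ ≠ 0 := by
      rintro rfl
      exact hμ 1 (-1) K.one_mem (K.neg_mem K.one_mem) 1 1 H.one_mem H.one_mem (by simp)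
    obtain ⟨γ, h, hγ, hh, hγh⟩ := IsCyclic.exists_pow_eq_one_mul_mem hcop
      (by rw [hcard, Nat.card_units, Nat.card_eq_fintype_card, hF]) (hH ▸ hwq) (Units.mk0 μ hμ0)
    refine ⟨γ, by rw [← pow_mul, hγ], fun h₁ h₂ hh₁ hh₂ he => ?_⟩
    have hμ_sum : IsSumOfTwo Hm (γ * h : Fˣ) :=
      IsSumOfTwo.mul_right ⟨h₁, hh₁, h₂, hh₂, he⟩ (hKH ▸ Subgroup.mem_sup_right hh)
    obtain ⟨c₁, c₂, hc₁, hc₂, e₁, e₂, he₁, he₂, hμe⟩ := (hKH ▸ hμ_sum).exists_eq_add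
    exact hμ c₁ c₂ hc₁ hc₂ e₁ e₂ he₁ he₂ (by rw [← hμe, hγh, Units.val_mk0])
  · rintro ⟨γ, -, hγ⟩
    refine ⟨γ, fun c₁ c₂ hc₁ hc₂ h₁ h₂ hh₁ hh₂ he => ?_⟩
    obtain ⟨g₁, hg₁, g₂, hg₂, hg⟩ := hKH ▸ isSumOfTwo_of_eq_add γ.ne_zero hc₁ hc₂ hh₁ hh₂ he
    exact hγ g₁ g₂ hg₁ hg₂ hg

/-- Standard setup, `ℓ ≥ 3`, `q ≡ 2^ℓ − 1 (mod 2^(ℓ+1))`. The covering radius of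
`C_s(q0)` equals `3` (i.e. some `μ ∈ F` is not of the form `c1·h1 + c2·h2`)
iff there exists `γ ∈ Fˣ` with `(γ^(q−1))^(2^ℓ) = 1` that is not a sum of two
elements of `H_m`. -/
theorem covering_radius_eq_three_iff (q0 s q ℓ : ℕ) (hq0 : IsPrimePow q0)
    (hq0odd : Odd q0) (hs : Odd s) (hq : q = q0 ^ s) (hℓ : 3 ≤ ℓ)
    (hqmod : q ≡ 2 ^ ℓ - 1 [MOD 2 ^ (ℓ + 1)])
    (F : Type*) [Field F] [Fintype F] (hF : Fintype.card F = q ^ 2)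
    (K : Subfield F) (hK : Nat.card K = q0)
    (H : Subgroup Fˣ) (hH : Nat.card H = q + 1)
    (m : ℕ) (hm : m = (q0 - 1) / 2)
    (Hm : Subgroup Fˣ) (hHm : Nat.card Hm = m * (q + 1)) :
    (∃ μ : F, ∀ c1 c2 : F, c1 ∈ K → c2 ∈ K →
        ∀ h1 h2 : Fˣ, h1 ∈ H → h2 ∈ H → μ ≠ c1 * (h1 : F) + c2 * (h2 : F)) ↔
      (∃ γ : Fˣ, (γ ^ (q - 1)) ^ 2 ^ ℓ = 1 ∧
        ∀ h1 h2 : Fˣ, h1 ∈ Hm → h2 ∈ Hm → (γ : F) ≠ (h1 : F) + (h2 : F)) :=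
  covering_radius_eq_three_iff_general q0 s q ℓ hq0odd hq hqmod F hF K hK H hH m hm Hm hHm
end
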